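/- arXiv:0709.1970 — 12 statements merged into one kernel-verified Lean document; each statement's English description precedes it below -/
import Mathlib

section
/- Suppose B is G-regular and V is a finite-dimensional ℚ_p-vector space with a ℚ_p-linear G-action. Then the natural B-linear map D_B(V) ⊗_E B → V ⊗_{ℚ_p} B sending d ⊗ b to b·d is injective; consequently dim_E D_B(V) ≤ dim_{ℚ_p} V. -/
open scoped TensorProduct

/-- The subring `E = B^G` of `G`-invariant elements of `B`. -/
def invariantSubring (G : Type*) [Group G] (B : Type*) [CommRing B]
    [MulSemiringAction G B] : Subring B where
  carrier := {b | ∀ g : G, g • b = b}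
  zero_mem' g := smul_zero g
  one_mem' g := smul_one g
  add_mem' := fun ha hb g => by rw [smul_add, ha g, hb g]
  mul_mem' := fun ha hb g => by rw [smul_mul', ha g, hb g]
  neg_mem' := fun ha g => by rw [smul_neg, ha g]

section

variable (p : ℕ) [Fact p.Prime]
variable (G : Type*) [Group G]
variable (B : Type*) [CommRing B] [Algebra ℚ_[p] B]
variable [MulSemiringAction G B] [SMulCommClass G ℚ_[p] B]
variable (V : Type*) [AddCommGroup V] [Module ℚ_[p] V]
variable [DistribMulAction G V] [SMulCommClass G ℚ_[p] V]

/-- The diagonal (semilinear) action of `g ∈ G` on `B ⊗[ℚ_p] V`,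
`g • (b ⊗ v) = (g • b) ⊗ (g • v)`. -/
noncomputable def diagAct (g : G) : B ⊗[ℚ_[p]] V →ₗ[ℚ_[p]] B ⊗[ℚ_[p]] V :=
  TensorProduct.map (DistribMulAction.toLinearMap ℚ_[p] B g)
    (DistribMulAction.toLinearMap ℚ_[p] V g)

lemma diagAct_smul (g : G) (b : B) (x : B ⊗[ℚ_[p]] V) :
    diagAct p G B V g (b • x) = (g • b) • diagAct p G B V g x := by
  induction x with
  | zero => simp
  | tmul b' v =>
      simp only [TensorProduct.smul_tmul', smul_eq_mul, diagAct, TensorProduct.map_tmul,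
        DistribSMul.toLinearMap_apply, smul_mul']
      exact congrArg (fun y : B => y ⊗ₜ[ℚ_[p]] (DistribMulAction.toLinearMap ℚ_[p] V g v))
        (smul_mul' g b b')
  | add x y hx hy => rw [smul_add, map_add, hx, hy, map_add, smul_add]

/-- `D_B(V) = (V ⊗[ℚ_p] B)^G` as a module over `E = B^G`. -/
noncomputable def invariantsD : Submodule (invariantSubring G B) (B ⊗[ℚ_[p]] V) where
  carrier := {x | ∀ g : G, diagAct p G B V g x = x}
  zero_mem' g := map_zero _
  add_mem' := fun hx hy g => by rw [map_add, hx g, hy g]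
  smul_mem' := fun e x hx g => by
    have h : diagAct p G B V g ((e : B) • x) = (g • (e : B)) • diagAct p G B V g x :=
      diagAct_smul p G B V g (e : B) x
    have he : g • (e : B) = (e : B) := e.2 g
    show diagAct p G B V g ((e : B) • x) = (e : B) • x
    rw [h, he, hx g]

/-- The natural map `D_B(V) ⊗[E] B → V ⊗[ℚ_p] B`, `d ⊗ b ↦ b • d`. -/
noncomputable def comparisonMap :
    (invariantsD p G B V) ⊗[invariantSubring G B] B →ₗ[invariantSubring G B]
      B ⊗[ℚ_[p]] V :=
  TensorProduct.lift
    { toFun := fun d =>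
        { toFun := fun b => b • (d : B ⊗[ℚ_[p]] V)
          map_add' := fun b₁ b₂ => add_smul b₁ b₂ _
          map_smul' := fun e b => by
            show ((e : B) * b) • (d : B ⊗[ℚ_[p]] V) = (e : B) • (b • (d : B ⊗[ℚ_[p]] V))
            rw [mul_smul] }
      map_add' := fun d₁ d₂ => by
        ext b
        simp
      map_smul' := fun e d => by
        ext b
        show b • ((e : B) • (d : B ⊗[ℚ_[p]] V)) = (e : B) • (b • (d : B ⊗[ℚ_[p]] V))
        rw [smul_comm] }

end

/-!
Let `d i` be `G`-invariant vectors of `B ⊗ V` that are linearly independent over `E = B^G`, and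
let `c` be a `B`-linear relation among them, of minimal support, with `c i₀ ≠ 0`. Twisting by
`g ∈ G` gives the relation `g • c`, so `(g • c i₀) • c - c i₀ • (g • c)` is a relation without
`i₀`-term, hence zero by minimality. Thus every `c i / c i₀ ∈ Frac B` is `G`-invariant, so lies
in `E` by regularity, and cancelling `c i₀` leaves an `E`-linear relation with `i₀`-coefficient
`1`, which is absurd. Applied to an `E`-basis of `D_B(V)`, this gives the injectivity, and the
dimension bound because `B ⊗ V` has rank `dim V` over `B`.
-/

section Regular

variable {G : Type*} [Group G] {B : Type*} [CommRing B] [MulSemiringAction G B]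
  {K : Type*} [Field K] [Algebra B K] [IsFractionRing B K] [MulSemiringAction G K]

theorem exists_mem_invariantSubring_mul_eq
    (hext : ∀ (g : G) (b : B), g • algebraMap B K b = algebraMap B K (g • b))
    (hreg : ∀ x : K, (∀ g : G, g • x = x) → x ∈ (algebraMap B K).range)
    {a b : B} (ha : a ≠ 0) (hab : ∀ g : G, (g • a) * b = a * (g • b)) :
    ∃ e ∈ invariantSubring G B, e * a = b := by
  have hinj := IsFractionRing.injective B K
  have hφa : algebraMap B K a ≠ 0 := (map_ne_zero_iff _ hinj).mpr ha
  have hx : ∀ g : G, g • (algebraMap B K b / algebraMap B K a) =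
      algebraMap B K b / algebraMap B K a := by
    intro g
    have hga : algebraMap B K (g • a) ≠ 0 := by
      rw [← hext]; exact (smul_ne_zero_iff_ne g).mpr hφa
    rw [smul_div₀', hext, hext, div_eq_div_iff hga hφa, ← map_mul, ← map_mul, mul_comm, ← hab,
      mul_comm]
  obtain ⟨e, he⟩ := hreg _ hx
  refine ⟨e, fun g => hinj ?_, hinj ?_⟩
  · rw [← hext, he, hx]
  · rw [map_mul, he, div_mul_cancel₀ _ hφa]

theorem isField_invariantSubring
    (hext : ∀ (g : G) (b : B), g • algebraMap B K b = algebraMap B K (g • b))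
    (hreg : ∀ x : K, (∀ g : G, g • x = x) → x ∈ (algebraMap B K).range) :
    IsField (invariantSubring G B) := by
  have : Nontrivial B := (algebraMap B K).domain_nontrivial
  refine ⟨⟨0, 1, fun h => zero_ne_one (congrArg Subtype.val h)⟩, mul_comm, fun {a} ha => ?_⟩
  obtain ⟨e, he, hea⟩ := exists_mem_invariantSubring_mul_eq hext hreg
    (b := 1) (fun h => ha (Subtype.ext h)) (fun g => by rw [a.2 g, smul_one])
  exact ⟨⟨e, he⟩, Subtype.ext (by rw [mul_comm]; exact hea)⟩

end Regular

section Descent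

variable {G : Type*} [Group G] {B : Type*} [CommRing B] [MulSemiringAction G B]
  {M : Type*} [AddCommGroup M] [Module B M]

theorem sum_smul_eq_zero_of_invariant (σ : G → M →+ M)
    (hσ : ∀ g (b : B) x, σ g (b • x) = (g • b) • σ g x)
    {ι : Type*} {d : ι → M} (hd : ∀ g i, σ g (d i) = d i) {s : Finset ι} {c : ι → B}
    (hc : ∑ i ∈ s, c i • d i = 0) (g : G) : ∑ i ∈ s, (g • c i) • d i = 0 := by
  simpa only [map_sum, hσ, hd, map_zero] using congrArg (σ g) hc

theorem LinearIndependent.of_invariantSubring [IsDomain B] [Module.IsTorsionFree B M]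
    {K : Type*} [Field K] [Algebra B K] [IsFractionRing B K] [MulSemiringAction G K]
    (hext : ∀ (g : G) (b : B), g • algebraMap B K b = algebraMap B K (g • b))
    (hreg : ∀ x : K, (∀ g : G, g • x = x) → x ∈ (algebraMap B K).range)
    (σ : G → M →+ M) (hσ : ∀ g (b : B) x, σ g (b • x) = (g • b) • σ g x)
    {ι : Type*} {d : ι → M} (hd : ∀ g i, σ g (d i) = d i)
    (hli : LinearIndependent (invariantSubring G B) d) : LinearIndependent B d := by
  classical
  rw [linearIndependent_iff']
  intro s
  induction s using Finset.strongInduction with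
  | H s ih =>
  intro c hc
  by_contra! hne
  obtain ⟨i₀, hi₀, hci₀⟩ := hne
  have hcross : ∀ g : G, ∀ i ∈ s, (g • c i₀) * c i = c i₀ * (g • c i) := by
    intro g i hi
    set c' := fun j => (g • c i₀) * c j - c i₀ * (g • c j)
    have hc' : ∑ i ∈ s.erase i₀, c' i • d i = 0 := by
      rw [Finset.sum_erase s (by simp [c', mul_comm])]
      simp only [c', sub_smul, mul_smul, Finset.sum_sub_distrib, ← Finset.smul_sum, hc,
        sum_smul_eq_zero_of_invariant σ hσ hd hc g, smul_zero, sub_zero]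
    by_cases h : i = i₀
    · subst h; exact mul_comm _ _
    · exact sub_eq_zero.mp
        (ih _ (Finset.erase_ssubset hi₀) c' hc' i (Finset.mem_erase.mpr ⟨h, hi⟩))
  have hratio : ∀ i, ∃ e : invariantSubring G B, i ∈ s → (e : B) * c i₀ = c i := by
    intro i
    by_cases hi : i ∈ s
    · obtain ⟨e, he, h⟩ :=
        exists_mem_invariantSubring_mul_eq hext hreg hci₀ (fun g => hcross g i hi)
      exact ⟨⟨e, he⟩, fun _ => h⟩
    · exact ⟨0, fun h => absurd h hi⟩
  choose e he using hratio
  have hrel : ∑ i ∈ s, e i • d i = 0 := by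
    have : c i₀ • ∑ i ∈ s, e i • d i = 0 := by
      rw [Finset.smul_sum, ← hc]
      refine Finset.sum_congr rfl fun i hi => ?_
      rw [← he i hi, mul_comm, mul_smul]; rfl
    exact (smul_eq_zero.mp this).resolve_left hci₀
  have he₀ := linearIndependent_iff'.mp hli s e hrel i₀ hi₀
  exact hci₀ (by rw [← he i₀ hi₀, he₀, ZeroMemClass.coe_zero, zero_mul])

end Descent

section Comparison

variable {p : ℕ} [Fact p.Prime] {G : Type*} [Group G] {B : Type*} [CommRing B]
  [Algebra ℚ_[p] B] [MulSemiringAction G B] [SMulCommClass G ℚ_[p] B]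
  {V : Type*} [AddCommGroup V] [Module ℚ_[p] V] [DistribMulAction G V] [SMulCommClass G ℚ_[p] V]
  {ι : Type*} (b : Module.Basis ι (invariantSubring G B) (invariantsD p G B V))

theorem comparisonMap_equivFinsuppOfBasisLeft_symm [DecidableEq ι] (f : ι →₀ B) :
    comparisonMap p G B V ((TensorProduct.equivFinsuppOfBasisLeft b).symm f) =
      Finsupp.linearCombination B (fun i => (b i : B ⊗[ℚ_[p]] V)) f := by
  rw [TensorProduct.equivFinsuppOfBasisLeft_symm_apply, map_finsuppSum,
    Finsupp.linearCombination_apply]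
  rfl

theorem comparisonMap_injective_of_linearIndependent
    (hb : LinearIndependent B fun i => (b i : B ⊗[ℚ_[p]] V)) :
    Function.Injective (comparisonMap p G B V) := by
  classical
  intro x y hxy
  rw [← (TensorProduct.equivFinsuppOfBasisLeft b).symm_apply_apply x,
    ← (TensorProduct.equivFinsuppOfBasisLeft b).symm_apply_apply y,
    comparisonMap_equivFinsuppOfBasisLeft_symm, comparisonMap_equivFinsuppOfBasisLeft_symm] at hxy
  exact (TensorProduct.equivFinsuppOfBasisLeft b).injective (hb hxy)

theorem finrank_invariantsD_le [Nontrivial B] [FiniteDimensional ℚ_[p] V]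
    (hb : LinearIndependent B fun i => (b i : B ⊗[ℚ_[p]] V)) :
    Module.finrank (invariantSubring G B) (invariantsD p G B V) ≤ Module.finrank ℚ_[p] V := by
  have := hb.finite
  have := Fintype.ofFinite ι
  rw [Module.finrank_eq_card_basis b, ← Module.finrank_baseChange (R := B)]
  exact hb.fintype_card_le_finrank

end Comparison

theorem comparisonMap_injective_general
    (p : ℕ) [Fact p.Prime]
    (G : Type*) [Group G]
    (B : Type*) [CommRing B] [IsDomain B] [Algebra ℚ_[p] B]
    [MulSemiringAction G B] [SMulCommClass G ℚ_[p] B]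
    [MulSemiringAction G (FractionRing B)]
    (hext : ∀ (g : G) (b : B),
      g • algebraMap B (FractionRing B) b = algebraMap B (FractionRing B) (g • b))
    (hreg₁ : ∀ x : FractionRing B, (∀ g : G, g • x = x) →
      x ∈ (algebraMap B (FractionRing B)).range)
    (V : Type*) [AddCommGroup V] [Module ℚ_[p] V] [FiniteDimensional ℚ_[p] V]
    [DistribMulAction G V] [SMulCommClass G ℚ_[p] V] :
    Function.Injective (comparisonMap p G B V) ∧
      Module.finrank (invariantSubring G B) (invariantsD p G B V) ≤
        Module.finrank ℚ_[p] V := by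
  let _ := (isField_invariantSubring hext hreg₁).toField
  have := ((Module.Basis.ofVectorSpace ℚ_[p] V).baseChange B).isTorsionFree
  let b := Module.Basis.ofVectorSpace (invariantSubring G B) (invariantsD p G B V)
  have hbE : LinearIndependent (invariantSubring G B) fun i => (b i : B ⊗[ℚ_[p]] V) :=
    b.linearIndependent.map' (invariantsD p G B V).subtype (Submodule.ker_subtype _)
  have hb : LinearIndependent B fun i => (b i : B ⊗[ℚ_[p]] V) :=
    hbE.of_invariantSubring hext hreg₁ (fun g => (diagAct p G B V g).toAddMonoidHom)
      (diagAct_smul p G B V) (fun g i => (b i).2 g)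
  exact ⟨comparisonMap_injective_of_linearIndependent b hb, finrank_invariantsD_le b hb⟩

/-- If `B` is `G`-regular, then for any finite-dimensional `p`-adic representation `V` of `G`
the natural map `D_B(V) ⊗[E] B → V ⊗[ℚ_p] B`, `d ⊗ b ↦ b • d`, is injective; consequently
`dim_E D_B(V) ≤ dim_{ℚ_p} V`. -/
theorem comparisonMap_injective
    (p : ℕ) [Fact p.Prime]
    (G : Type*) [Group G]
    (B : Type*) [CommRing B] [IsDomain B] [Algebra ℚ_[p] B]
    [MulSemiringAction G B] [SMulCommClass G ℚ_[p] B]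
    [MulSemiringAction G (FractionRing B)]
    (hext : ∀ (g : G) (b : B),
      g • algebraMap B (FractionRing B) b = algebraMap B (FractionRing B) (g • b))
    (hreg₁ : ∀ x : FractionRing B, (∀ g : G, g • x = x) →
      x ∈ (algebraMap B (FractionRing B)).range)
    (hreg₂ : ∀ b : B, b ≠ 0 →
      (∀ g : G, ∃ c : ℚ_[p], g • b = c • b) → IsUnit b)
    (V : Type*) [AddCommGroup V] [Module ℚ_[p] V] [FiniteDimensional ℚ_[p] V]
    [DistribMulAction G V] [SMulCommClass G ℚ_[p] V] :
    Function.Injective (comparisonMap p G B V) ∧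
      Module.finrank (invariantSubring G B) (invariantsD p G B V) ≤
        Module.finrank ℚ_[p] V :=
  comparisonMap_injective_general p G B hext hreg₁ V
end

section
/- Let O be a commutative ring and p a prime number such that O is complete and separated for the p-adic topology (IsAdicComplete for the ideal (p)). Let x : ℕ → O be a sequence with x_{n+1}^p ≡ x_n (mod pO) for all n. Then there exists a unique y ∈ O such that y ≡ x_n^{p^n} (mod p^{n+1}O) for all n. In particular, y depends only on the residues of the x_n modulo p, so the sequence of lifts may be chosen arbitrarily. -/
private lemma span_pow_smul_top {O : Type*} [CommRing O] (a : O) (n : ℕ) :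
    (Ideal.span {a}) ^ n • (⊤ : Submodule O O) = Ideal.span {a ^ n} := by
  rw [smul_eq_mul, Ideal.mul_top, Ideal.span_singleton_pow]

private lemma step {O : Type*} [CommRing O] {p : ℕ} {x : ℕ → O}
    (hx : ∀ n, (p : O) ∣ x (n + 1) ^ p - x n) (n : ℕ) :
    (p : O) ^ (n + 1) ∣ x (n + 1) ^ p ^ (n + 1) - x n ^ p ^ n := by
  have h := dvd_sub_pow_of_dvd_sub (hx n) n
  rw [← pow_mul, ← pow_succ'] at h
  simpa using h

private lemma chain {O : Type*} [CommRing O] {p : ℕ} {x : ℕ → O}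
    (hx : ∀ n, (p : O) ∣ x (n + 1) ^ p - x n) {m n : ℕ} (h : m ≤ n) :
    (p : O) ^ (m + 1) ∣ x n ^ p ^ n - x m ^ p ^ m := by
  induction n with
  | zero => simp [Nat.le_zero.mp h]
  | succ n ih =>
    rcases Nat.lt_or_ge m (n + 1) with h' | h'
    · have h1 : (p : O) ^ (m + 1) ∣ x (n + 1) ^ p ^ (n + 1) - x n ^ p ^ n :=
        dvd_trans (pow_dvd_pow _ (by omega)) (step hx n)
      have h2 := ih (by omega)
      have := dvd_add h1 h2
      simpa using this
    · have : m = n + 1 := le_antisymm h h'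
      subst this; simp

/-- Let `O` be a commutative ring, complete and separated for the `p`-adic topology, and
`x : ℕ → O` a sequence with `x (n+1) ^ p ≡ x n` mod `p`.  Then there is a unique `y : O` with
`y ≡ x n ^ (p ^ n)` mod `p ^ (n+1)` for all `n`; moreover `y` depends only on the residues of
the `x n` modulo `p`, so the lifts may be chosen arbitrarily. -/
theorem fontaine_theta_bar_exists_unique
    (O : Type*) [CommRing O] (p : ℕ) (hp : p.Prime)
    [IsAdicComplete (Ideal.span {(p : O)}) O]
    (x : ℕ → O) (hx : ∀ n, (p : O) ∣ x (n + 1) ^ p - x n) :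
    (∃! y : O, ∀ n, (p : O) ^ (n + 1) ∣ y - x n ^ p ^ n) ∧
      ∀ x' : ℕ → O, (∀ n, (p : O) ∣ x' (n + 1) ^ p - x' n) →
        (∀ n, (p : O) ∣ x' n - x n) →
          ∀ y : O, (∀ n, (p : O) ^ (n + 1) ∣ y - x n ^ p ^ n) →
            ∀ n, (p : O) ^ (n + 1) ∣ y - x' n ^ p ^ n := by
  constructor
  · -- existence and uniqueness
    have hpre : IsPrecomplete (Ideal.span {(p : O)}) O := inferInstance
    have hhaus : IsHausdorff (Ideal.span {(p : O)}) O := inferInstance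
    obtain ⟨L, hL⟩ := hpre.prec (f := fun n => x n ^ p ^ n) (by
      intro m n hmn
      rw [SModEq.sub_mem, span_pow_smul_top, Ideal.mem_span_singleton]
      exact dvd_sub_comm.mp ((pow_dvd_pow ((p : O)) (Nat.le_succ m)).trans (chain hx hmn)))
    have key : ∀ n, (p : O) ^ (n + 1) ∣ x (n + 1) ^ p ^ (n + 1) - L := by
      intro n
      have h1 := hL (n + 1)
      rw [SModEq.sub_mem, span_pow_smul_top, Ideal.mem_span_singleton] at h1
      exact h1
    refine ⟨L, fun n => ?_, fun y' hy' => ?_⟩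
    · have h2 : (p : O) ^ (n + 1) ∣ x (n + 1) ^ p ^ (n + 1) - x n ^ p ^ n := step hx n
      have := dvd_sub h2 (key n)
      simpa [sub_sub_sub_cancel_left] using this
    · have hd : ∀ n : ℕ, (p : O) ^ n ∣ y' - L := by
        intro n
        have h2 : (p : O) ^ (n + 1) ∣ x n ^ p ^ n - L := by
          have := dvd_sub (key n) (step hx n)
          simpa [sub_sub_sub_cancel_left] using this
        have h3 : (p : O) ^ (n + 1) ∣ y' - L := by
          have := dvd_add (hy' n) h2
          simpa [sub_add_sub_cancel] using this
        exact (pow_dvd_pow _ (Nat.le_succ n)).trans h3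
      have := hhaus.haus (y' - L) (fun n => by
        rw [SModEq.sub_mem, sub_zero, span_pow_smul_top, Ideal.mem_span_singleton]
        exact hd n)
      exact eq_of_sub_eq_zero this
  · intro x' hx' hxx' y hy n
    have h1 : (p : O) ^ (n + 1) ∣ x' n ^ p ^ n - x n ^ p ^ n := by
      simpa using dvd_sub_pow_of_dvd_sub (hxx' n) n
    have := dvd_sub (hy n) h1
    simpa [sub_sub_sub_cancel_right] using this
end

section
/- Let O be a commutative ring and p a prime number such that O is complete and separated for the p-adic topology. Let x, x' : ℕ → O be sequences with x_{n+1}^p ≡ x_n and (x'_{n+1})^p ≡ x'_n (mod pO) for all n, and let y, y' ∈ O be the unique elements with y ≡ x_n^{p^n} and y' ≡ (x'_n)^{p^n} (mod p^{n+1}O) for all n. Then the product sequence (x_n x'_n) satisfies (x_{n+1}x'_{n+1})^p ≡ x_n x'_n (mod pO), and the unique z ∈ O with z ≡ (x_n x'_n)^{p^n} (mod p^{n+1}O) for all n equals y·y'. Hence Fontaine's map θ̄ is multiplicative. -/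
theorem IsHausdorff.eq_of_forall_pow_succ_dvd_sub {R : Type*} [CommRing R] {a : R}
    [IsHausdorff (Ideal.span {a}) R] {x y : R} (h : ∀ n, a ^ (n + 1) ∣ x - y) : x = y := by
  refine (IsHausdorff.eq_iff_smodEq (I := Ideal.span {a})).2 fun n => ?_
  rw [SModEq.sub_mem, Ideal.span_singleton_pow, smul_eq_mul, Ideal.mul_top,
    Ideal.mem_span_singleton]
  cases n with
  | zero => exact (pow_zero a).symm ▸ one_dvd _
  | succ n => exact h n

theorem fontaine_theta_bar_multiplicative_general
    (O : Type*) [CommRing O] (p : ℕ)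
    [IsAdicComplete (Ideal.span {(p : O)}) O]
    (x x' : ℕ → O)
    (hx : ∀ n, (p : O) ∣ x (n + 1) ^ p - x n)
    (hx' : ∀ n, (p : O) ∣ x' (n + 1) ^ p - x' n)
    (y y' : O)
    (hy : ∀ n, (p : O) ^ (n + 1) ∣ y - x n ^ p ^ n)
    (hy' : ∀ n, (p : O) ^ (n + 1) ∣ y' - x' n ^ p ^ n) :
    (∀ n, (p : O) ∣ (x (n + 1) * x' (n + 1)) ^ p - x n * x' n) ∧
      ∀ z : O, (∀ n, (p : O) ^ (n + 1) ∣ z - (x n * x' n) ^ p ^ n) → z = y * y' := by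
  refine ⟨fun n => by simpa only [mul_pow] using dvd_mul_sub_mul (hx n) (hx' n), fun z hz => ?_⟩
  refine IsHausdorff.eq_of_forall_pow_succ_dvd_sub (a := (p : O)) fun n => ?_
  have hyy' : (p : O) ^ (n + 1) ∣ (x n * x' n) ^ p ^ n - y * y' := by
    rw [mul_pow]
    exact dvd_mul_sub_mul (dvd_sub_comm.1 (hy n)) (dvd_sub_comm.1 (hy' n))
  simpa only [sub_add_sub_cancel] using dvd_add (hz n) hyy'

/-- Fontaine's map `θ̄` is multiplicative: if `y` and `y'` are the unique elements attached to
`p`-power-compatible sequences `x` and `x'`, then the product sequence is again compatible and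
the element attached to it is `y * y'`. -/
theorem fontaine_theta_bar_multiplicative
    (O : Type*) [CommRing O] (p : ℕ) (hp : p.Prime)
    [IsAdicComplete (Ideal.span {(p : O)}) O]
    (x x' : ℕ → O)
    (hx : ∀ n, (p : O) ∣ x (n + 1) ^ p - x n)
    (hx' : ∀ n, (p : O) ∣ x' (n + 1) ^ p - x' n)
    (y y' : O)
    (hy : ∀ n, (p : O) ^ (n + 1) ∣ y - x n ^ p ^ n)
    (hy' : ∀ n, (p : O) ^ (n + 1) ∣ y' - x' n ^ p ^ n) :
    (∀ n, (p : O) ∣ (x (n + 1) * x' (n + 1)) ^ p - x n * x' n) ∧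
      ∀ z : O, (∀ n, (p : O) ^ (n + 1) ∣ z - (x n * x' n) ^ p ^ n) → z = y * y' :=
  fontaine_theta_bar_multiplicative_general O p x x' hx hx' y y' hy hy'
end

section
/- Let p be a prime and R a perfect commutative ring of characteristic p. For x ∈ R, the Teichmüller lift [x] ∈ W(R) admits p^n-th roots for all n ≥ 0; conversely, if a ∈ W(R) admits a p^n-th root in W(R) for every n ≥ 0, then a = [a_0], the Teichmüller lift of its 0-th Witt component a_0. Consequently, the Teichmüller lift [x] is the unique lift of x (i.e., element with 0-th Witt component x) which has p^n-th roots for all n ≥ 0. -/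
open WittVector

/-- Coefficients of `c * p ^ n` vanish below `n`. -/
private lemma aux_mul_p_pow_coeff (p : ℕ) [hp : Fact p.Prime] (R : Type*) [CommRing R]
    [CharP R p] (c : WittVector p R) (n k : ℕ) (hk : k < n) :
    (c * (p : WittVector p R) ^ n).coeff k = 0 := by
  induction n generalizing c k with
  | zero => omega
  | succ n ih =>
    have : c * (p : WittVector p R) ^ (n + 1) = (c * (p : WittVector p R) ^ n) * p := by ring
    rw [this, ← WittVector.verschiebung_frobenius]
    cases k with
    | zero => exact WittVector.verschiebung_coeff_zero _
    | succ k =>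
      rw [WittVector.verschiebung_coeff_succ, WittVector.coeff_frobenius_charP,
        ih c k (by omega), zero_pow hp.out.ne_zero]

private lemma aux_sub_coeff_zero (p : ℕ) [hp : Fact p.Prime] (R : Type*) [CommRing R]
    (x y : WittVector p R) : (x - y).coeff 0 = x.coeff 0 - y.coeff 0 := by
  have := map_sub (WittVector.constantCoeff : WittVector p R →+* R) x y
  simpa using this

/-- Every element of a perfect ring has `p ^ n`-th roots. -/
private lemma aux_pow_root (p : ℕ) [hp : Fact p.Prime] (R : Type*) [CommRing R]
    [CharP R p] [PerfectRing R p] (x : R) (n : ℕ) : ∃ y : R, y ^ p ^ n = x := by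
  induction n with
  | zero => exact ⟨x, by simp⟩
  | succ n ih =>
    obtain ⟨y, hy⟩ := ih
    obtain ⟨z, hz⟩ := (frobeniusEquiv R p).surjective y
    have hz' : z ^ p = y := by simpa [frobenius_def] using hz
    exact ⟨z, by rw [pow_succ', pow_mul, hz', hy]⟩

/-- Over a perfect ring `R` of characteristic `p`, the Teichmüller lift `[x]` admits `p^n`-th
roots for all `n`; conversely any Witt vector admitting `p^n`-th roots for all `n` is the
Teichmüller lift of its 0-th component.  Hence `[x]` is the unique lift of `x` admitting
`p^n`-th roots for all `n`. -/
theorem teichmuller_iff_pow_p_roots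
    (p : ℕ) [hp : Fact p.Prime] (R : Type*) [CommRing R] [CharP R p] [PerfectRing R p] :
    (∀ (x : R) (n : ℕ), ∃ b : WittVector p R, b ^ p ^ n = WittVector.teichmuller p x) ∧
    (∀ a : WittVector p R, (∀ n : ℕ, ∃ b : WittVector p R, b ^ p ^ n = a) →
      a = WittVector.teichmuller p (a.coeff 0)) ∧
    (∀ (x : R) (a : WittVector p R), a.coeff 0 = x →
      (∀ n : ℕ, ∃ b : WittVector p R, b ^ p ^ n = a) → a = WittVector.teichmuller p x) := by
  have key : ∀ a : WittVector p R, (∀ n : ℕ, ∃ b : WittVector p R, b ^ p ^ n = a) →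
      a = WittVector.teichmuller p (a.coeff 0) := by
    intro a ha
    -- main claim: for every `n`, `p ^ (n+1)` divides `a - [a₀]`.
    have main : ∀ n : ℕ, ∃ c : WittVector p R,
        a - WittVector.teichmuller p (a.coeff 0) = c * (p : WittVector p R) ^ (n + 1) := by
      intro n
      obtain ⟨b, hb⟩ := ha n
      -- b ≡ [b₀] mod p
      have h0 : ∀ i < 1, (b - WittVector.teichmuller p (b.coeff 0)).coeff i = 0 := by
        intro i hi
        interval_cases i
        rw [aux_sub_coeff_zero, WittVector.teichmuller_coeff_zero, sub_self]
      have hV := WittVector.eq_iterate_verschiebung h0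
      -- so `p ∣ b - [b₀]`
      have hdvd : (p : WittVector p R) ∣ b - WittVector.teichmuller p (b.coeff 0) := by
        rw [hV]
        obtain ⟨c, hc⟩ := (WittVector.frobeniusEquiv p R).surjective
          ((b - WittVector.teichmuller p (b.coeff 0)).shift 1)
        refine ⟨c, ?_⟩
        simp only [Function.iterate_one]
        rw [← hc]
        have := WittVector.verschiebung_frobenius c
        rw [mul_comm] at this
        rw [← this]; rfl
      obtain ⟨c, hc⟩ := dvd_sub_pow_of_dvd_sub hdvd n
      -- identify coefficients
      have hteich : (WittVector.teichmuller p (b.coeff 0)) ^ p ^ n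
          = WittVector.teichmuller p (b.coeff 0 ^ p ^ n) := by
        rw [map_pow]
      have ha0 : a.coeff 0 = b.coeff 0 ^ p ^ n := by
        have hcc : (b ^ p ^ n - WittVector.teichmuller p (b.coeff 0 ^ p ^ n)).coeff 0 = 0 := by
          rw [← hteich, hc, mul_comm]
          exact aux_mul_p_pow_coeff p R c (n + 1) 0 (by omega)
        rw [aux_sub_coeff_zero, WittVector.teichmuller_coeff_zero, hb, sub_eq_zero] at hcc
        exact hcc
      refine ⟨c, ?_⟩
      rw [ha0, ← hteich, ← hb, hc]
      ring
    -- conclude all coefficients of the difference vanish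
    have hzero : a - WittVector.teichmuller p (a.coeff 0) = 0 := by
      ext k
      obtain ⟨c, hc⟩ := main k
      rw [hc, WittVector.zero_coeff]
      exact aux_mul_p_pow_coeff p R c (k + 1) k (by omega)
    exact sub_eq_zero.mp hzero
  refine ⟨?_, key, ?_⟩
  · intro x n
    obtain ⟨y, hy⟩ := aux_pow_root p R x n
    exact ⟨WittVector.teichmuller p y, by rw [← map_pow, hy]⟩
  · intro x a hx ha
    rw [← hx]
    exact key a ha
end

section
/- Let p be a prime and R a perfect commutative ring of characteristic p. Then the 0-th Witt component map W(R) → R, a ↦ a.coeff 0, is a surjective ring homomorphism whose kernel is exactly the principal ideal p·W(R); that is, W(R)/pW(R) ≅ R. -/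
/-- Over a perfect ring `R` of characteristic `p`, the 0-th Witt component map
`W(R) → R` is a surjective ring homomorphism with kernel the principal ideal `(p)`;
that is, `W(R)/pW(R) ≅ R`. -/
theorem wittVector_coeff_zero_ringHom_surjective_ker
    (p : ℕ) [hp : Fact p.Prime] (R : Type*) [CommRing R] [CharP R p] [PerfectRing R p] :
    ∃ f : WittVector p R →+* R, (∀ a : WittVector p R, f a = a.coeff 0) ∧
      Function.Surjective f ∧
      RingHom.ker f = Ideal.span {(p : WittVector p R)} := by
  refine ⟨WittVector.constantCoeff, fun a => rfl, ?_, ?_⟩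
  · intro r
    exact ⟨WittVector.mk p (fun n => if n = 0 then r else 0), rfl⟩
  · ext x
    rw [RingHom.mem_ker, Ideal.mem_span_singleton]
    constructor
    · intro h
      have h0 : ∀ i < 1, x.coeff i = 0 := by
        intro i hi
        interval_cases i
        exact h
      have hx : x = WittVector.verschiebung (x.shift 1) := by
        simpa using WittVector.eq_iterate_verschiebung h0
      obtain ⟨z, hz⟩ := (WittVector.frobeniusEquiv p R).surjective (x.shift 1)
      refine ⟨z, ?_⟩
      rw [hx, ← hz]
      have := WittVector.verschiebung_frobenius (p := p) z
      simpa [mul_comm] using this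
    · rintro ⟨z, rfl⟩
      simp [WittVector.mul_coeff_zero]
end

section
/- There exists a unique ring homomorphism θ : W(E⁺) → O such that for every x ∈ E⁺, every n ≥ 0, and every a ∈ O lifting the n-th component x_n ∈ O/pO of x, one has θ([x]) ≡ a^{p^n} (mod p^{n+1}O). (This is Fontaine's map θ on A⁺ = W(E⁺), which sends Teichmüller lifts [x] to θ̄(x).) -/
open scoped NNReal

/-! Take θ to be Mathlib's `fontaineTheta`: it sends `[x]` to the untilt of `x`, the `p`-adic limit
of `aₙ ^ pⁿ` over lifts `aₙ` of the components `xₙ`, which is exactly the required congruence.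
Conversely the congruences pin down `θ([x])` as that limit, and a ring map out of `W(E⁺)` is
determined modulo each `pⁿ` by its values on Teichmüller lifts, as `p` is nilpotent there. -/

open WittVector

theorem pow_dvd_sub_iff_sModEq {R : Type*} [CommRing R] {a y z : R} {n : ℕ} :
    a ^ n ∣ y - z ↔ y ≡ z [SMOD Ideal.span {a} ^ n] := by
  rw [SModEq.sub_mem, Ideal.span_singleton_pow, Ideal.mem_span_singleton]

theorem WittVector.ringHom_ext_of_isHausdorff {p : ℕ} [Fact p.Prime] {R S : Type*}
    [CommRing R] [CharP R p] [PerfectRing R p] [CommRing S] {I : Ideal S} [IsHausdorff I S]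
    (hpI : (p : S) ∈ I) {f g : WittVector p R →+* S}
    (h : ∀ x, f (teichmuller p x) = g (teichmuller p x)) : f = g := by
  ext y
  refine (IsHausdorff.eq_iff_smodEq (I := I)).mpr fun n ↦ ?_
  have hnil : IsNilpotent (p : S ⧸ I ^ n) := ⟨n, by
    rw [← map_natCast (Ideal.Quotient.mk (I ^ n)), ← map_pow, Ideal.Quotient.eq_zero_iff_mem]
    exact Ideal.pow_mem_pow hpI n⟩
  have := eq_of_apply_teichmuller_eq ((Ideal.Quotient.mk (I ^ n)).comp f)
    ((Ideal.Quotient.mk (I ^ n)).comp g) hnil fun x ↦ by simp [h]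
  rw [smul_eq_mul, Ideal.mul_top, SModEq.idealQuotientMk]
  exact RingHom.congr_fun this y

namespace PreTilt

variable {O : Type*} [CommRing O] {p : ℕ} [Fact p.Prime] [Fact ¬IsUnit (p : O)]
  [IsAdicComplete (Ideal.span {(p : O)}) O]

theorem pow_succ_dvd_untilt_sub {x : PreTilt O p} {n : ℕ} {a : O}
    (ha : Ideal.Quotient.mk (Ideal.span {(p : O)}) a = coeff n x) :
    (p : O) ^ (n + 1) ∣ x.untilt - a ^ p ^ n :=
  pow_dvd_sub_iff_sModEq.mpr (Perfection.teichmuller_sModEq ha)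

theorem untilt_eq_of_forall_pow_succ_dvd {x : PreTilt O p} {y : O}
    (h : ∀ n a, Ideal.Quotient.mk (Ideal.span {(p : O)}) a = coeff n x →
      (p : O) ^ (n + 1) ∣ y - a ^ p ^ n) :
    x.untilt = y :=
  Perfection.teichmuller_spec fun n ↦
    let ⟨a, ha⟩ := Ideal.Quotient.mk_surjective (coeff n x)
    ⟨a, ha, (pow_dvd_sub_iff_sModEq.mp (h n a ha)).symm⟩

end PreTilt

/-- Fontaine's map `θ : A⁺ = W(E⁺) → O`: there is a unique ring homomorphism
`θ : W(E⁺) → O` such that for every `x ∈ E⁺`, every `n`, and every lift `a ∈ O` of the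
`n`-th component of `x`, one has `θ([x]) ≡ a^(pⁿ) (mod p^(n+1) O)`. -/
theorem fontaine_theta_existsUnique
    (p : ℕ) [Fact p.Prime]
    (K : Type*) [Field K] (v : Valuation K ℝ≥0)
    (O : Type*) [CommRing O] [Algebra O K] (hv : v.Integers O)
    [Fact (v p ≠ 1)]
    [IsAdicComplete (Ideal.span {(p : O)}) O] :
    haveI : Fact ¬IsUnit (p : O) :=
      Fact.mk <| mt hv.one_of_isUnit <| (map_natCast (algebraMap O K) p).symm ▸ (‹Fact (v p ≠ 1)›).1
    ∃! θ : WittVector p (PreTilt O p) →+* O,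
      ∀ (x : PreTilt O p) (n : ℕ) (a : O),
        (Ideal.Quotient.mk (Ideal.span {(p : O)}) a : ModP O p) =
            Perfection.coeff (ModP O p) p n x →
          (p : O) ^ (n + 1) ∣ θ (WittVector.teichmuller p x) - a ^ p ^ n := by
  have : Fact ¬IsUnit (p : O) :=
    Fact.mk <| mt hv.one_of_isUnit <| (map_natCast (algebraMap O K) p).symm ▸ (‹Fact (v p ≠ 1)›).1
  refine ⟨fontaineTheta O p, fun x n a ha ↦ ?_, fun θ hθ ↦ ?_⟩
  · rw [fontaineTheta_teichmuller]
    exact PreTilt.pow_succ_dvd_untilt_sub ha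
  · refine ringHom_ext_of_isHausdorff (Ideal.mem_span_singleton_self (p : O)) fun x ↦ ?_
    rw [fontaineTheta_teichmuller]
    exact (PreTilt.untilt_eq_of_forall_pow_succ_dvd (hθ x)).symm
end

section
/- Assume K is algebraically closed. Choose a compatible system (ζ_n)_{n≥0} in O with ζ_0 = 1, ζ_1 ≠ 1, ζ_{n+1}^p = ζ_n, and ζ_n a primitive p^n-th root of unity, and let ε, ε' ∈ E⁺ be the elements whose n-th components are ζ_n mod p and ζ_{n+1} mod p respectively (so (ε')^p = ε). Then the kernel of Fontaine's homomorphism θ : W(E⁺) → O is the principal ideal generated by ([ε] − 1)/([ε'] − 1) = Σ_{i=0}^{p-1} [ε']^i. -/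
/-!
`θ` kills `ξ = ∑ [ε']^i` because `θ [ε'] = ζ₁` is a nontrivial `p`-th root of unity.
Conversely, if `θ x = 0` then `θ [x₀] = x₀♯` (`Perfection.teichmuller₀ x₀`) lies in `pO`,
i.e. `x₀ ∈ E⁺` has valuation `v (x₀♯)` at most `v p`. The reduction `ξ₀ = ∑ ε'^i` has
valuation exactly `v p`, as one reads off from its component `∑ ζ₂^i`, so `ξ₀ ∣ x₀` in `E⁺`.
This gives `x = ξ [c] + p x'` with `θ x' = 0`, and iterating, `p`-adic completeness of
`W(E⁺)` puts `x` in `(ξ)`.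
-/

open scoped NNReal

/-- The old Mathlib `ModP K v O hv p`: `O/(p)` for `O`, ring of integers of `K`. -/
def ModPOld (K : Type*) [Field K] (v : Valuation K ℝ≥0) (O : Type*) [CommRing O] [Algebra O K]
    (_hv : v.Integers O) (p : ℕ) :=
  O ⧸ (Ideal.span {(p : O)} : Ideal O)

instance ModPOld.commRing (K : Type*) [Field K] (v : Valuation K ℝ≥0) (O : Type*) [CommRing O]
    [Algebra O K] (hv : v.Integers O) (p : ℕ) : CommRing (ModPOld K v O hv p) :=
  Ideal.Quotient.commRing (Ideal.span {(p : O)} : Ideal O)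

instance ModPOld.charP (K : Type*) [Field K] (v : Valuation K ℝ≥0) (O : Type*) [CommRing O]
    [Algebra O K] (hv : v.Integers O) (p : ℕ) [Fact p.Prime] [hvp : Fact (v p ≠ 1)] :
    CharP (ModPOld K v O hv p) p :=
  CharP.quotient O p <| mt hv.one_of_isUnit <| (map_natCast (algebraMap O K) p).symm ▸ hvp.1

/-- The old Mathlib `PreTilt K v O hv p`: perfection of `O/(p)`. -/
def PreTiltOld (K : Type*) [Field K] (v : Valuation K ℝ≥0) (O : Type*) [CommRing O] [Algebra O K]
    (hv : v.Integers O) (p : ℕ) :=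
  Perfection (ModPOld K v O hv p) p

instance PreTiltOld.commRing (K : Type*) [Field K] (v : Valuation K ℝ≥0) (O : Type*) [CommRing O]
    [Algebra O K] (hv : v.Integers O) (p : ℕ) [Fact p.Prime] [Fact (v p ≠ 1)] :
    CommRing (PreTiltOld K v O hv p) :=
  inferInstanceAs <| CommRing <| Perfection _ _

open Finset Ideal

section RootsOfUnity

variable {R : Type*} [CommRing R] {p : ℕ}

theorem geom_sum_eq_zero_of_pow_eq_one [IsDomain R] {z : R} (hz : z ^ p = 1) (hz1 : z ≠ 1) :
    ∑ i ∈ range p, z ^ i = 0 := by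
  have h := geom_sum_mul z p
  rw [hz, sub_self] at h
  exact (mul_eq_zero.1 h).resolve_right (sub_ne_zero.2 hz1)

theorem natCast_ne_zero_of_pow_eq_one [IsDomain R] (hp : p.Prime) {z : R} (hz : z ^ p = 1)
    (hz1 : z ≠ 1) : (p : R) ≠ 0 := by
  intro h
  have : Fact p.Prime := ⟨hp⟩
  have : CharP R p := (CharP.charP_iff_prime_eq_zero hp).2 h
  apply hz1
  rw [← sub_eq_zero, ← pow_eq_zero_iff hp.ne_zero, sub_pow_char, hz, one_pow, sub_self]

theorem exists_geom_sum_one_add_eq (hp : p.Prime) (x : R) :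
    ∃ g, ∑ i ∈ range p, (1 + x) ^ i = x ^ (p - 1) + p * (1 + x * g) := by
  obtain ⟨n, rfl⟩ : ∃ n, p = n + 2 := ⟨p - 2, by have := hp.two_le; omega⟩
  have hsum : ∑ i ∈ range (n + 2), (1 + x) ^ i =
      ∑ i ∈ range (n + 2), ((n + 2).choose (i + 1) : R) * x ^ i := by
    simpa [Polynomial.eval_finsetSum, add_comm] using
      congrArg (Polynomial.eval x) (Polynomial.geom_sum_X_comp_X_add_one_eq_sum (R := R) (n + 2))
  set q : ℕ → R := fun i ↦ (((n + 2).choose (i + 2) / (n + 2) : ℕ) : R)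
  have hmiddle : ∑ i ∈ range n, ((n + 2).choose (i + 1 + 1) : R) * x ^ (i + 1) =
      (n + 2 : ℕ) * (x * ∑ i ∈ range n, q i * x ^ i) := by
    rw [mul_sum, mul_sum]
    refine sum_congr rfl fun i hi ↦ ?_
    rw [← Nat.mul_div_cancel' (hp.dvd_choose_self (by omega) (by simp at hi; omega)),
      Nat.cast_mul]
    ring
  refine ⟨∑ i ∈ range n, q i * x ^ i, ?_⟩
  rw [hsum, sum_range_succ, sum_range_succ', hmiddle]
  simp only [zero_add, Nat.choose_one_right, Nat.choose_self, show n + 2 - 1 = n + 1 by omega]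
  ring

end RootsOfUnity

namespace Valuation

variable {O Γ₀ : Type*} [CommRing O] [IsDomain O] [LinearOrderedCommGroupWithZero Γ₀]
  {w : Valuation O Γ₀} {p : ℕ}

theorem pow_pred_map_sub_one_eq_of_pow_eq_one (hp : p.Prime) (hw : ∀ a, w a ≤ 1)
    (hwp : w p < 1) {z : O} (hz : z ^ p = 1) (hz1 : z ≠ 1) :
    w (z - 1) ^ (p - 1) = w p := by
  obtain ⟨g, hg⟩ := exists_geom_sum_one_add_eq hp (z - 1)
  rw [add_sub_cancel, geom_sum_eq_zero_of_pow_eq_one hz hz1, eq_comm, add_eq_zero_iff_eq_neg] at hg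
  have hval : w (z - 1) ^ (p - 1) = w p * w (1 + (z - 1) * g) := by
    rw [← map_pow, hg, map_neg, map_mul]
  have hlt : w (z - 1) < 1 := by
    by_contra! h
    have := (one_le_pow₀ (n := p - 1) h).trans_eq hval
    exact absurd ((this.trans (mul_le_of_le_one_right' (hw _))).trans_lt hwp) (lt_irrefl _)
  have hunit : w (1 + (z - 1) * g) = 1 :=
    map_one_add_of_lt _ (by rw [map_mul]; exact (mul_le_of_le_one_right' (hw g)).trans_lt hlt)
  rwa [hunit, mul_one] at hval

theorem lt_map_geom_sum_and_pow_eq (hp : p.Prime) (hw : ∀ a, w a ≤ 1)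
    (hwp0 : w p ≠ 0) (hwp : w p < 1) {z₁ z₂ : O} (hz₁ : z₁ ^ p = 1) (hz₁1 : z₁ ≠ 1)
    (hz₂ : z₂ ^ p = z₁) :
    w p < w (∑ i ∈ range p, z₂ ^ i) ∧ w (∑ i ∈ range p, z₂ ^ i) ^ p = w p := by
  -- With `x = z₂ - 1`, `S = x ^ (p - 1) + p * (unit)` and `x * S = z₁ - 1`; comparing valuations
  -- shows that `x ^ (p - 1)` is the dominant term of `S`.
  obtain ⟨g, hg⟩ := exists_geom_sum_one_add_eq hp (z₂ - 1)
  rw [add_sub_cancel] at hg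
  set S := ∑ i ∈ range p, z₂ ^ i
  have hy : w (z₂ - 1) ^ (p - 1) * w S ^ (p - 1) = w p := by
    rw [← mul_pow, ← map_mul, mul_comm, geom_sum_mul, hz₂,
      pow_pred_map_sub_one_eq_of_pow_eq_one hp hw hwp hz₁ hz₁1]
  have hrest : w (p * (1 + (z₂ - 1) * g)) ≤ w p := by
    rw [map_mul]; exact mul_le_of_le_one_right' (hw _)
  have hx : w p < w ((z₂ - 1) ^ (p - 1)) := by
    by_contra! h
    have hS : w S ≤ w p := by
      rw [hg]; exact (w.map_add _ _).trans (max_le h hrest)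
    have : w p ≤ w p ^ p := by
      calc w p = w (z₂ - 1) ^ (p - 1) * w S ^ (p - 1) := hy.symm
        _ ≤ w p * w p ^ (p - 1) := by rw [← map_pow]; gcongr
        _ = w p ^ p := by rw [← pow_succ', Nat.sub_add_cancel hp.one_le]
    exact absurd this (not_le.2 (pow_lt_self_of_lt_one₀ (zero_lt_iff.2 hwp0) hwp hp.one_lt))
  have hSx : w S = w ((z₂ - 1) ^ (p - 1)) := by
    rw [hg]; exact map_add_eq_of_lt_left _ (hrest.trans_lt hx)
  refine ⟨hSx ▸ hx, ?_⟩
  calc w S ^ p = w S * w S ^ (p - 1) := by rw [← pow_succ', Nat.sub_add_cancel hp.one_le]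
    _ = w p := by rw [← hy, hSx, map_pow]

end Valuation

namespace Ideal

variable {A : Type*} [CommRing A] {π : A}

theorem sModEq_span_singleton_pow_iff {x y : A} {n : ℕ} :
    x ≡ y [SMOD span {π} ^ n] ↔ π ^ n ∣ x - y := by
  rw [SModEq.sub_mem, span_singleton_pow, mem_span_singleton]

theorem le_span_singleton_of_forall_eq_mul_add_mul [IsAdicComplete (span {π}) A] {ξ : A}
    {J : Ideal A} (h : ∀ w ∈ J, ∃ c, ∃ w' ∈ J, w = ξ * c + π * w') : J ≤ span {ξ} := by
  intro x hx
  choose! c next hnext hdec using h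
  set X : ℕ → A := fun n ↦ next^[n] x
  have hX : ∀ n, X n ∈ J := fun n ↦ by
    induction n with
    | zero => exact hx
    | succ n ih => simpa only [X, Function.iterate_succ_apply'] using hnext _ ih
  set Y : ℕ → A := fun n ↦ ∑ j ∈ range n, π ^ j * c (X j)
  have hxY : ∀ n, x = ξ * Y n + π ^ n * X n := fun n ↦ by
    induction n with
    | zero => simp [X, Y]
    | succ n ih =>
      have hXn : X (n + 1) = next (X n) := Function.iterate_succ_apply' ..
      rw [ih, hdec _ (hX n), hXn]
      simp only [Y, sum_range_succ]
      ring
  have hY : ∀ {m n}, m ≤ n → Y m ≡ Y n [SMOD (span {π} ^ m • ⊤ : Submodule A A)] := by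
    intro m n hmn
    rw [smul_eq_mul, mul_top, sModEq_span_singleton_pow_iff, dvd_sub_comm]
    simp only [Y, ← sum_Ico_eq_sub _ hmn]
    exact dvd_sum fun j hj ↦ (pow_dvd_pow π (mem_Ico.1 hj).1).mul_right _
  obtain ⟨L, hL⟩ := IsPrecomplete.prec inferInstance hY
  refine mem_span_singleton.2 ⟨L, (IsHausdorff.eq_iff_smodEq (I := span {π})).2 fun n ↦ ?_⟩
  simp only [smul_eq_mul, mul_top] at hL ⊢
  obtain ⟨t, ht⟩ := sModEq_span_singleton_pow_iff.1 (hL n)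
  rw [sModEq_span_singleton_pow_iff, hxY n]
  exact ⟨ξ * t + X n, by linear_combination ξ * ht⟩

end Ideal

namespace WittVector

variable {p : ℕ} [Fact p.Prime] {k : Type*} [CommRing k] [CharP k p] [PerfectRing k p]

theorem exists_eq_mul_teichmuller_add_p_mul {x ξ : WittVector p k} {c : k}
    (h : x.coeff 0 = ξ.coeff 0 * c) : ∃ y, x = ξ * teichmuller p c + p * y := by
  have hmem : x - ξ * teichmuller p c ∈ span {(p : WittVector p k)} := by
    rw [mem_span_p_iff_coeff_zero_eq_zero, ← constantCoeff_apply, map_sub, map_mul]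
    simp [constantCoeff_apply, h]
  obtain ⟨y, hy⟩ := mem_span_singleton.1 hmem
  exact ⟨y, by linear_combination hy⟩

theorem ker_eq_span_singleton_of_coeff_zero_dvd {O : Type*} [CommRing O] (θ : WittVector p k →+* O)
    (hp : IsLeftRegular (p : O)) {ξ : WittVector p k} (hξ : θ ξ = 0)
    (hdvd : ∀ a, (p : O) ∣ θ (teichmuller p a) → ξ.coeff 0 ∣ a) :
    RingHom.ker θ = span {ξ} := by
  refine le_antisymm (le_span_singleton_of_forall_eq_mul_add_mul (π := (p : WittVector p k))
    fun x hx ↦ ?_) ((span_singleton_le_iff_mem _).2 hξ)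
  obtain ⟨y, hy⟩ := exists_eq_mul_teichmuller_add_p_mul (x := x) (ξ := 1) (c := x.coeff 0)
    (by rw [one_coeff_zero, one_mul])
  have hθy := congrArg θ hy
  simp only [RingHom.mem_ker.1 hx, map_add, map_mul, one_mul, map_natCast] at hθy
  obtain ⟨c, hc⟩ := hdvd (x.coeff 0) ⟨-θ y, by linear_combination -hθy⟩
  obtain ⟨x', hx'⟩ := exists_eq_mul_teichmuller_add_p_mul hc
  have hθx' := congrArg θ hx'
  simp only [RingHom.mem_ker.1 hx, hξ, map_add, map_mul, map_natCast, zero_mul, zero_add] at hθx'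
  exact ⟨teichmuller p c, x', hp (hθx'.symm.trans (mul_zero _).symm), hx'⟩

end WittVector

namespace Perfection

section Teichmuller

variable {p : ℕ} [Fact p.Prime] {R : Type*} [CommRing R] {I : Ideal R} [CharP (R ⧸ I) p]
  [IsAdicComplete I R]

theorem teichmuller₀_eq_coeffMonoidHom_pow (x : Perfection (R ⧸ I) p) (n : ℕ) :
    teichmuller₀ p I x = coeffMonoidHom R p n ((quotientMulEquiv p I).symm x) ^ p ^ n := by
  rw [coeffMonoidHom_pow_p_pow_self, coeff_zero_symm_quotientMulEquiv]

theorem mk_coeffMonoidHom_symm_quotientMulEquiv (x : Perfection (R ⧸ I) p) (n : ℕ) :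
    Ideal.Quotient.mk I (coeffMonoidHom R p n ((quotientMulEquiv p I).symm x)) =
      coeff _ p n x := by
  rw [← coeff_quotientMulEquiv, MulEquiv.apply_symm_apply]

end Teichmuller

variable {K Γ₀ : Type*} [Field K] [LinearOrderedCommGroupWithZero Γ₀] {v : Valuation K Γ₀}
  {O : Type*} [CommRing O] [Algebra O K] (hv : v.Integers O) {p : ℕ}

include hv

theorem dvd_of_valuation_coeffMonoidHom_zero_le [IsDomain O] (hp : p ≠ 0)
    {x y : Perfection O p} (hy : coeffMonoidHom O p 0 y ≠ 0)
    (h : v (algebraMap O K (coeffMonoidHom O p 0 x)) ≤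
      v (algebraMap O K (coeffMonoidHom O p 0 y))) :
    y ∣ x := by
  have hy_ne : ∀ n, coeffMonoidHom O p n y ≠ 0 := fun n hyn ↦ hy <| by
    rw [← coeffMonoidHom_pow_p_pow_self _ n, hyn, zero_pow (pow_ne_zero n hp)]
  have hdvd : ∀ n, coeffMonoidHom O p n y ∣ coeffMonoidHom O p n x := fun n ↦ by
    refine hv.dvd_of_le ((pow_le_pow_iff_left₀ zero_le zero_le (pow_ne_zero n hp)).1 ?_)
    rw [← coeffMonoidHom_pow_p_pow_self x n, ← coeffMonoidHom_pow_p_pow_self y n] at h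
    simpa only [map_pow] using h
  choose c hc using hdvd
  have hc_pow : ∀ n, c (n + 1) ^ p = c n := fun n ↦ by
    refine mul_left_cancel₀ (hy_ne n) ?_
    calc coeffMonoidHom O p n y * c (n + 1) ^ p
        = (coeffMonoidHom O p (n + 1) y * c (n + 1)) ^ p := by
          rw [mul_pow, coeffMonoidHom_pow_p']
      _ = coeffMonoidHom O p n y * c n := by rw [← hc, coeffMonoidHom_pow_p', hc]
  exact ⟨⟨c, hc_pow⟩, extMonoid fun n ↦ hc n⟩

variable [Fact p.Prime] [CharP (O ⧸ span {(p : O)}) p] [IsAdicComplete (span {(p : O)}) O]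

theorem valuation_teichmuller₀_eq {x : Perfection (O ⧸ span {(p : O)}) p} {n : ℕ} {a : O}
    (ha : Ideal.Quotient.mk _ a = coeff _ p n x)
    (hpa : v (algebraMap O K p) < v (algebraMap O K a)) :
    v (algebraMap O K (teichmuller₀ p _ x)) = v (algebraMap O K a) ^ p ^ n := by
  have hsa := mk_coeffMonoidHom_symm_quotientMulEquiv x n
  rw [← ha, Ideal.Quotient.eq, mem_span_singleton] at hsa
  rw [teichmuller₀_eq_coeffMonoidHom_pow x n, map_pow, Valuation.map_pow]
  congr 1
  refine Valuation.map_eq_of_sub_lt _ (lt_of_le_of_lt ?_ hpa)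
  rw [← map_sub]
  exact hv.le_of_dvd hsa

theorem dvd_of_valuation_teichmuller₀_le [IsDomain O]
    {x y : Perfection (O ⧸ span {(p : O)}) p} (hy : teichmuller₀ p _ y ≠ 0)
    (h : v (algebraMap O K (teichmuller₀ p _ x)) ≤ v (algebraMap O K (teichmuller₀ p _ y))) :
    y ∣ x := by
  simp only [← coeff_zero_symm_quotientMulEquiv] at hy h
  rw [← MulEquiv.apply_symm_apply (quotientMulEquiv p _) x,
    ← MulEquiv.apply_symm_apply (quotientMulEquiv p _) y]
  exact map_dvd _ (dvd_of_valuation_coeffMonoidHom_zero_le hv (Fact.out : p.Prime).ne_zero hy h)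

theorem valuation_teichmuller₀_geom_sum_eq [IsDomain O] {ε : Perfection (O ⧸ span {(p : O)}) p}
    (hε : teichmuller₀ p _ ε ^ p = 1) (hε1 : teichmuller₀ p _ ε ≠ 1) :
    v (algebraMap O K (teichmuller₀ p _ (∑ i ∈ range p, ε ^ i))) = v (algebraMap O K p) := by
  have hp : p.Prime := Fact.out
  set w := v.comap (algebraMap O K)
  have hwp0 : w p ≠ 0 := by
    simpa [w] using hv.hom_inj.ne (natCast_ne_zero_of_pow_eq_one hp hε hε1)
  have hwp1 : w p < 1 := by
    refine (hv.map_le_one p).lt_of_ne fun h ↦ ?_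
    have := CharP.nontrivial_of_char_ne_one (R := O ⧸ span {(p : O)}) hp.ne_one
    rw [Ideal.Quotient.nontrivial_iff, Ne, span_singleton_eq_top] at this
    exact this (hv.isUnit_of_one' h)
  -- `ρ` is the untilt of `ε ^ (1 / p)`.
  set ρ := coeffMonoidHom O p 1 ((quotientMulEquiv p _).symm ε)
  have hρ : ρ ^ p = teichmuller₀ p _ ε := by
    rw [teichmuller₀_eq_coeffMonoidHom_pow ε 1, pow_one]
  obtain ⟨hS, hSp⟩ := w.lt_map_geom_sum_and_pow_eq hp hv.map_le_one hwp0 hwp1 hε hε1 hρ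
  refine (valuation_teichmuller₀_eq hv (n := 1) ?_ hS).trans (by rw [pow_one]; exact hSp)
  simp only [map_sum, map_pow, ρ, mk_coeffMonoidHom_symm_quotientMulEquiv]

end Perfection

namespace WittVector

open Perfection

theorem ker_eq_span_geom_sum_teichmuller {K Γ₀ : Type*} [Field K]
    [LinearOrderedCommGroupWithZero Γ₀] {v : Valuation K Γ₀} {O : Type*} [CommRing O]
    [Algebra O K] (hv : v.Integers O) {p : ℕ} [Fact p.Prime] [CharP (O ⧸ span {(p : O)}) p]
    [IsAdicComplete (span {(p : O)}) O]
    (θ : WittVector p (Perfection (O ⧸ span {(p : O)}) p) →+* O)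
    (hθ : ∀ x, θ (teichmuller p x) = teichmuller₀ p _ x) {ε : Perfection (O ⧸ span {(p : O)}) p}
    (hε : teichmuller₀ p _ ε ^ p = 1) (hε1 : teichmuller₀ p _ ε ≠ 1) :
    RingHom.ker θ = span {∑ i ∈ range p, teichmuller p ε ^ i} := by
  have : IsDomain O := Function.Injective.isDomain (algebraMap O K) hv.hom_inj
  have hpO : (p : O) ≠ 0 := natCast_ne_zero_of_pow_eq_one Fact.out hε hε1
  have hξ₀ := valuation_teichmuller₀_geom_sum_eq hv hε hε1
  refine ker_eq_span_singleton_of_coeff_zero_dvd θ (IsRegular.of_ne_zero hpO).left ?_ fun a ha ↦ ?_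
  · simp only [map_sum, map_pow, hθ]
    exact geom_sum_eq_zero_of_pow_eq_one hε hε1
  · have hξ₀_coeff : (∑ i ∈ range p, teichmuller p ε ^ i).coeff 0 = ∑ i ∈ range p, ε ^ i := by
      rw [← constantCoeff_apply, map_sum]
      simp only [map_pow, constantCoeff_apply, teichmuller_coeff_zero]
    rw [hξ₀_coeff]
    refine dvd_of_valuation_teichmuller₀_le hv (fun h ↦ hpO (hv.hom_inj ?_)) ?_
    · rw [map_zero, ← v.zero_iff, ← hξ₀, h, map_zero, map_zero]
    · rw [hξ₀, ← hθ]
      exact hv.le_of_dvd ha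

end WittVector

theorem fontaine_theta_ker_eq_span_general
    (p : ℕ) [Fact p.Prime]
    (K : Type*) [Field K] (v : Valuation K ℝ≥0)
    (O : Type*) [CommRing O] [Algebra O K] (hv : v.Integers O)
    [Fact (v p ≠ 1)]
    [IsAdicComplete (Ideal.span {(p : O)}) O]
    (θ : WittVector p (PreTiltOld K v O hv p) →+* O)
    (hθ : ∀ (x : PreTiltOld K v O hv p) (n : ℕ) (a : O),
      (Ideal.Quotient.mk (Ideal.span {(p : O)}) a : ModPOld K v O hv p) =
          Perfection.coeff (ModPOld K v O hv p) p n x →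
        (p : O) ^ (n + 1) ∣ θ (WittVector.teichmuller p x) - a ^ p ^ n)
    (ζ : ℕ → O)
    (hζ0 : ζ 0 = 1) (hζ1 : ζ 1 ≠ 1) (hζp : ∀ n, ζ (n + 1) ^ p = ζ n)
    (ε' : PreTiltOld K v O hv p)
    (hε' : ∀ n, Perfection.coeff (ModPOld K v O hv p) p n ε' =
      (Ideal.Quotient.mk (Ideal.span {(p : O)}) (ζ (n + 1)) : ModPOld K v O hv p)) :
    RingHom.ker θ =
      Ideal.span {∑ i ∈ Finset.range p, WittVector.teichmuller p ε' ^ i} := by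
  have : CharP (O ⧸ span {(p : O)}) p := ModPOld.charP K v O hv p
  have hθ_teich : ∀ x, θ (WittVector.teichmuller p x) = Perfection.teichmuller₀ p _ x :=
    fun x ↦ (Perfection.teichmuller₀_spec fun n ↦ ⟨_, Ideal.Quotient.mk_out _,
      (sModEq_span_singleton_pow_iff.2 (hθ x n _ (Ideal.Quotient.mk_out _))).symm⟩).symm
  have hζ_pow : ∀ n, ζ (n + 1) ^ p ^ n = ζ 1 := fun n ↦ by
    induction n with
    | zero => rw [pow_zero, pow_one]
    | succ n ih => rw [pow_succ', pow_mul, hζp, ih]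
  have hε'_teich : Perfection.teichmuller₀ p _ ε' = ζ 1 :=
    Perfection.teichmuller₀_spec fun n ↦ ⟨ζ (n + 1), (hε' n).symm, by rw [hζ_pow]⟩
  exact WittVector.ker_eq_span_geom_sum_teichmuller hv θ hθ_teich
    (hε'_teich ▸ by rw [hζp 0, hζ0]) (hε'_teich ▸ hζ1)

/-- If `K` is algebraically closed and `(ζ_n)` is a compatible system of primitive `pⁿ`-th
roots of unity, with `ε, ε' ∈ E⁺` having components `ζ_n mod p` resp. `ζ_{n+1} mod p`
(so `(ε')^p = ε`), then the kernel of Fontaine's map `θ : W(E⁺) → O` is the principal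
ideal generated by `([ε] - 1)/([ε'] - 1) = ∑_{i<p} [ε']^i`. -/
theorem fontaine_theta_ker_eq_span
    (p : ℕ) [Fact p.Prime]
    (K : Type*) [Field K] [IsAlgClosed K] (v : Valuation K ℝ≥0)
    (O : Type*) [CommRing O] [Algebra O K] (hv : v.Integers O)
    [Fact (v p ≠ 1)]
    [IsAdicComplete (Ideal.span {(p : O)}) O]
    (θ : WittVector p (PreTiltOld K v O hv p) →+* O)
    (hθ : ∀ (x : PreTiltOld K v O hv p) (n : ℕ) (a : O),
      (Ideal.Quotient.mk (Ideal.span {(p : O)}) a : ModPOld K v O hv p) =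
          Perfection.coeff (ModPOld K v O hv p) p n x →
        (p : O) ^ (n + 1) ∣ θ (WittVector.teichmuller p x) - a ^ p ^ n)
    (ζ : ℕ → O)
    (hζ0 : ζ 0 = 1) (hζ1 : ζ 1 ≠ 1) (hζp : ∀ n, ζ (n + 1) ^ p = ζ n)
    (hζprim : ∀ n, IsPrimitiveRoot (ζ n) (p ^ n))
    (ε ε' : PreTiltOld K v O hv p)
    (hε : ∀ n, Perfection.coeff (ModPOld K v O hv p) p n ε =
      (Ideal.Quotient.mk (Ideal.span {(p : O)}) (ζ n) : ModPOld K v O hv p))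
    (hε' : ∀ n, Perfection.coeff (ModPOld K v O hv p) p n ε' =
      (Ideal.Quotient.mk (Ideal.span {(p : O)}) (ζ (n + 1)) : ModPOld K v O hv p)) :
    RingHom.ker θ =
      Ideal.span {∑ i ∈ Finset.range p, WittVector.teichmuller p ε' ^ i} :=
  fontaine_theta_ker_eq_span_general p K v O hv θ hθ ζ hζ0 hζ1 hζp ε' hε'
end

section
/- Assume K is algebraically closed. Then the ring A⁺ = W(E⁺) is complete and separated for the ker(θ)-adic topology, i.e., W(E⁺) is IsAdicComplete with respect to the ideal ker θ, where θ : W(E⁺) → O is Fontaine's homomorphism. -/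
/-!
As `K` is algebraically closed, `p` has a compatible system of `p`-power roots in `O`, giving
`ϖ ∈ E⁺` with `ϖ♯ = p`; put `ξ = [ϖ] - p`, so that `θ ξ = 0`. Divisibility in `E⁺` is detected by
`♯`, hence every `x ∈ ker θ` can be written `ξ y + p x'` with `x' ∈ ker θ`, and the `p`-adic
completeness of `W(E⁺)` gives `ker θ = (ξ)`.

The same criterion shows that the kernel of the `k`-th coefficient map `E⁺ → O/p` is
`(ϖ ^ p ^ k)`, so `E⁺` is `ϖ`-adically complete and `W(E⁺)` is complete and separated for the weak
filtration `{x | xᵢ ∈ ϖ ^ n E⁺ for i < n}`, whose `n`-th step contains `ξ ^ n`. A `ξ`-adic Cauchy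
sequence with `f (k + 1) - f k = ξ ^ k aₖ` then has the weak limit `L = f 0 + ∑ ξ ^ k aₖ`, and
comparing with the weak limits of the tails `∑ ξ ^ j a_{m+j}` shows `L - f m ∈ (ξ ^ m)`.
-/

open scoped NNReal

theorem fact_not_isUnit_of_integers_of_fact (p : ℕ) {K : Type*} [Field K] {v : Valuation K ℝ≥0}
    {O : Type*} [CommRing O] [Algebra O K] (hv : v.Integers O) [hvp : Fact (v p ≠ 1)] :
    Fact ¬IsUnit (p : O) :=
  Fact.mk <| mt hv.one_of_isUnit <| (map_natCast (algebraMap O K) p).symm ▸ hvp.1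

open Ideal Finset

section Adic

variable {A : Type*} [CommRing A]

theorem Finset.sum_range_add_pow_mul (ξ : A) (b : ℕ → A) (m k : ℕ) :
    ∑ j ∈ range (m + k), ξ ^ j * b j =
      ∑ j ∈ range m, ξ ^ j * b j + ξ ^ m * ∑ j ∈ range k, ξ ^ j * b (m + j) := by
  rw [sum_range_add, mul_sum]
  exact congrArg _ (sum_congr rfl fun j _ => by ring)

theorem Ideal.span_singleton_pow_smul_top (a : A) (n : ℕ) :
    (span {a} ^ n • ⊤ : Ideal A) = span {a ^ n} := by
  rw [smul_eq_mul, mul_top, span_singleton_pow]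

theorem isAdicComplete_span_singleton_of_filtration {J : ℕ → Ideal A} (hJ : Antitone J)
    (hsep : ∀ x, (∀ n, x ∈ J n) → x = 0)
    (hcomplete : ∀ f : ℕ → A, (∀ {m n}, m ≤ n → f n - f m ∈ J m) → ∃ L, ∀ n, L - f n ∈ J n)
    {ξ : A} (hξ : ∀ n, ξ ^ n ∈ J n) : IsAdicComplete (span {ξ}) A := by
  simp only [isAdicComplete_iff, isHausdorff_iff, isPrecomplete_iff, SModEq.sub_mem,
    span_singleton_pow_smul_top, mem_span_singleton, sub_zero]
  refine ⟨fun x hx => hsep x fun n => ?_, fun f hf => ?_⟩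
  · obtain ⟨c, rfl⟩ := hx n
    exact mul_mem_right _ _ (hξ n)
  have hstep (k : ℕ) : ∃ a, f (k + 1) = f k + ξ ^ k * a := by
    obtain ⟨a, ha⟩ := hf k.le_succ
    exact ⟨-a, by linear_combination -ha⟩
  choose a ha using hstep
  let T (m n : ℕ) : A := ∑ j ∈ range n, ξ ^ j * a (m + j)
  have hT (m n k : ℕ) : T m (n + k) = T m n + ξ ^ n * T (m + n) k := by
    simpa [T, add_assoc] using sum_range_add_pow_mul ξ (fun j => a (m + j)) n k
  have hf_eq (n : ℕ) : f n = f 0 + T 0 n := by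
    induction n with
    | zero => simp [T]
    | succ n ih =>
      rw [ha n, ih]
      simp only [T, sum_range_succ, zero_add]
      ring
  have hlim (m : ℕ) : ∃ E, ∀ n, E - T m n ∈ J n := hcomplete _ fun {n n'} h => by
    obtain ⟨k, rfl⟩ := Nat.exists_eq_add_of_le h
    rw [hT, add_sub_cancel_left]
    exact mul_mem_right _ _ (hξ n)
  choose E hE using hlim
  have hshift (m : ℕ) : E 0 = T 0 m + ξ ^ m * E m := by
    refine sub_eq_zero.mp (hsep _ fun n => ?_)
    have hsplit : E 0 - (T 0 m + ξ ^ m * E m) = (E 0 - T 0 (m + n)) - ξ ^ m * (E m - T m n) := by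
      rw [hT 0 m n, zero_add]; ring
    rw [hsplit]
    exact sub_mem (hJ (Nat.le_add_left n m) (hE 0 (m + n))) (mul_mem_left _ _ (hE m n))
  exact ⟨f 0 + E 0, fun m => ⟨-E m, by rw [hshift m, hf_eq m]; ring⟩⟩

theorem Ideal.le_span_singleton_of_le_sup_mul {π ξ : A} [IsAdicComplete (span {π}) A]
    {K : Ideal A} (h : K ≤ span {ξ} ⊔ span {π} * K) : K ≤ span {ξ} := by
  have hstep (z : K) : ∃ y : A, ∃ z' : K, (z : A) = ξ * y + π * z' := by
    obtain ⟨u, hu, w, hw, huw⟩ := Submodule.mem_sup.mp (h z.2)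
    obtain ⟨y, rfl⟩ := mem_span_singleton.mp hu
    obtain ⟨z', hz', rfl⟩ := mem_span_singleton_mul.mp hw
    exact ⟨y, ⟨z', hz'⟩, huw.symm⟩
  choose Y Z hYZ using hstep
  intro x hx
  let g (n : ℕ) : K := Z^[n] ⟨x, hx⟩
  let S (n : ℕ) : A := ∑ j ∈ range n, π ^ j * Y (g j)
  have hx_eq (n : ℕ) : x = ξ * S n + π ^ n * g n := by
    induction n with
    | zero => simp [S, g]
    | succ n ih =>
      have hg : g (n + 1) = Z (g n) := Function.iterate_succ_apply' ..
      rw [ih, hYZ (g n)]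
      simp only [S, sum_range_succ, hg]
      ring
  have hS {m n : ℕ} (hmn : m ≤ n) : π ^ m ∣ S n - S m := by
    obtain ⟨k, rfl⟩ := Nat.exists_eq_add_of_le hmn
    exact ⟨∑ j ∈ range k, π ^ j * Y (g (m + j)), by
      simp only [S]; rw [sum_range_add_pow_mul, add_sub_cancel_left]⟩
  obtain ⟨L, hL⟩ := IsPrecomplete.prec (I := span {π}) inferInstance (f := S) fun {m n} hmn => by
    rw [SModEq.sub_mem, span_singleton_pow_smul_top, mem_span_singleton, ← dvd_neg, neg_sub]
    exact hS hmn
  have hzero : x - ξ * L = 0 := IsHausdorff.haus (I := span {π}) inferInstance _ fun n => by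
    have := hL n
    rw [SModEq.sub_mem, span_singleton_pow_smul_top, mem_span_singleton] at this
    rw [SModEq.zero, span_singleton_pow_smul_top, mem_span_singleton]
    obtain ⟨c, hc⟩ := this
    exact ⟨g n + ξ * c, by rw [hx_eq n] at *; linear_combination ξ * hc⟩
  exact mem_span_singleton.mpr ⟨L, sub_eq_zero.mp hzero⟩

end Adic

namespace Perfection

variable {R : Type*} [CommRing R] {p : ℕ} [Fact p.Prime] [CharP R p]

theorem coeff_eq_zero_iff_dvd {ϖ : Perfection R p} (h : RingHom.ker (coeff R p 0) = span {ϖ})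
    (k : ℕ) (x : Perfection R p) : coeff R p k x = 0 ↔ ϖ ^ p ^ k ∣ x := by
  set e := iterateFrobeniusEquiv (Perfection R p) p k
  obtain ⟨y, rfl⟩ := e.surjective x
  have hcoeff : coeff R p k (e y) = coeff R p 0 y := by
    have := coeffMonoidHom_pow_p_pow y 0 k
    rwa [zero_add] at this
  rw [hcoeff, ← RingHom.mem_ker, h, mem_span_singleton, ← map_dvd_iff e]
  rfl

theorem isAdicComplete_span_singleton {ϖ : Perfection R p}
    (h : RingHom.ker (coeff R p 0) = span {ϖ}) : IsAdicComplete (span {ϖ}) (Perfection R p) := by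
  simp only [isAdicComplete_iff, isHausdorff_iff, isPrecomplete_iff, SModEq.sub_mem,
    span_singleton_pow_smul_top, mem_span_singleton, sub_zero]
  refine ⟨fun x hx => ext fun k => ?_, fun f hf => ?_⟩
  · rw [map_zero, coeff_eq_zero_iff_dvd h]
    exact hx _
  have hcoeff {k n : ℕ} (hkn : p ^ k ≤ n) : coeff R p k (f n) = coeff R p k (f (p ^ k)) := by
    rw [← sub_eq_zero, ← map_sub, coeff_eq_zero_iff_dvd h]
    exact dvd_sub_comm.mp (hf hkn)
  let L : Perfection R p := ⟨fun k => coeff R p k (f (p ^ k)), fun k => by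
    dsimp only
    rw [← hcoeff (pow_le_pow_right₀ (Fact.out : p.Prime).one_le k.le_succ), coeff_pow_p']⟩
  refine ⟨L, fun n => ?_⟩
  obtain ⟨k, hk⟩ : ∃ k, n ≤ p ^ k := ⟨n, (Nat.lt_pow_self (Fact.out : p.Prime).one_lt).le⟩
  have hL : ϖ ^ p ^ k ∣ L - f (p ^ k) := by
    rw [← coeff_eq_zero_iff_dvd h, map_sub, sub_eq_zero]
    rfl
  rw [← sub_add_sub_cancel _ (f (p ^ k))]
  exact dvd_add (hf hk) (dvd_sub_comm.mp ((pow_dvd_pow ϖ hk).trans hL))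

end Perfection

namespace WittVector

variable {p : ℕ} [Fact p.Prime] {R : Type*} [CommRing R]

noncomputable def weakIdeal (I : Ideal R) (n : ℕ) : Ideal (WittVector p R) :=
  RingHom.ker ((truncate n).comp (map (Ideal.Quotient.mk (I ^ n))))

theorem sub_mem_weakIdeal_iff {I : Ideal R} {n : ℕ} {x y : WittVector p R} :
    x - y ∈ weakIdeal I n ↔ ∀ i < n, x.coeff i - y.coeff i ∈ I ^ n := by
  rw [weakIdeal, RingHom.sub_mem_ker_iff, TruncatedWittVector.ext_iff, Fin.forall_iff]
  simp only [RingHom.comp_apply, coeff_truncate, map_coeff, Ideal.Quotient.eq]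

theorem mem_weakIdeal_iff {I : Ideal R} {n : ℕ} {x : WittVector p R} :
    x ∈ weakIdeal I n ↔ ∀ i < n, x.coeff i ∈ I ^ n := by
  simpa using sub_mem_weakIdeal_iff (x := x) (y := 0)

theorem weakIdeal_antitone (I : Ideal R) : Antitone (weakIdeal (p := p) I) := by
  intro m n hmn x hx
  rw [mem_weakIdeal_iff] at hx ⊢
  exact fun i hi => Ideal.pow_le_pow_right hmn (hx i (hi.trans_le hmn))

theorem eq_zero_of_forall_mem_weakIdeal {I : Ideal R} [IsHausdorff I R] {x : WittVector p R}
    (hx : ∀ n, x ∈ weakIdeal I n) : x = 0 := by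
  ext i
  rw [zero_coeff]
  refine IsHausdorff.haus (I := I) inferInstance _ fun n => ?_
  rw [SModEq.zero, smul_eq_mul, mul_top]
  exact Ideal.pow_le_pow_right (Nat.le_add_right n (i + 1))
    (mem_weakIdeal_iff.mp (hx (n + (i + 1))) i (by omega))

theorem exists_sub_mem_weakIdeal {I : Ideal R} [IsPrecomplete I R] (f : ℕ → WittVector p R)
    (hf : ∀ {m n}, m ≤ n → f n - f m ∈ weakIdeal I m) :
    ∃ L, ∀ n, L - f n ∈ weakIdeal I n := by
  have hcoeff {i m n : ℕ} (him : i < m) (hmn : m ≤ n) : (f n).coeff i - (f m).coeff i ∈ I ^ m :=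
    sub_mem_weakIdeal_iff.mp (hf hmn) i him
  have hlim (i : ℕ) : ∃ c, ∀ n, (f (n + i + 1)).coeff i ≡ c [SMOD (I ^ n • ⊤ : Ideal R)] := by
    refine IsPrecomplete.prec inferInstance fun {m n} hmn => ?_
    rw [SModEq.sub_mem, smul_eq_mul, mul_top, ← neg_mem_iff, neg_sub]
    exact Ideal.pow_le_pow_right (by omega) (hcoeff (by omega) (by omega))
  choose c hc using hlim
  refine ⟨mk p c, fun n => sub_mem_weakIdeal_iff.mpr fun i hi => ?_⟩
  have hci := hc i n
  rw [SModEq.sub_mem, smul_eq_mul, mul_top, ← neg_mem_iff, neg_sub] at hci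
  rw [coeff_mk, ← sub_add_sub_cancel _ ((f (n + i + 1)).coeff i)]
  exact add_mem hci (hcoeff hi (by omega))

theorem teichmuller_sub_p_pow_mem_weakIdeal [CharP R p] {I : Ideal R} {a : R} (ha : a ∈ I)
    (n : ℕ) : (teichmuller p a - p) ^ n ∈ weakIdeal I n := by
  have hterm {m k : ℕ} (hmk : n ≤ m + k) :
      teichmuller p a ^ m * (p : WittVector p R) ^ k ∈ weakIdeal I n := by
    rw [← map_pow, mem_weakIdeal_iff]
    intro i hi
    obtain rfl | hik := eq_or_ne i k
    · have : n ≤ m * p ^ i := calc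
        n ≤ m * (i + 1) := by rw [mul_add_one]; nlinarith
        _ ≤ m * p ^ i := Nat.mul_le_mul_left m (Nat.lt_pow_self (Fact.out : p.Prime).one_lt)
      rw [teichmuller_mul_pow_coeff, ← pow_mul]
      exact Ideal.pow_le_pow_right this (pow_mem_pow ha _)
    · rw [teichmuller_mul_pow_coeff_of_ne _ hik]
      exact zero_mem _
  rw [sub_eq_add_neg, add_pow]
  refine sum_mem fun m hm => ?_
  have hmn : m ≤ n := Nat.lt_succ_iff.mp (Finset.mem_range.mp hm)
  have heq : teichmuller p a ^ m * (-(p : WittVector p R)) ^ (n - m) * (n.choose m : _) =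
      teichmuller p a ^ m * (p : WittVector p R) ^ (n - m) * ((-1) ^ (n - m) * n.choose m) := by
    rw [neg_pow]; ring
  rw [heq]
  exact Ideal.mul_mem_right _ _ (hterm (by omega))

end WittVector

theorem Valuation.Integers.exists_pow_eq {K Γ₀ O : Type*} [Field K] [IsAlgClosed K]
    [LinearOrderedCommGroupWithZero Γ₀] {v : Valuation K Γ₀} [CommRing O] [Algebra O K]
    (hv : v.Integers O) {n : ℕ} (hn : n ≠ 0) (a : O) : ∃ b : O, b ^ n = a := by
  obtain ⟨x, hx⟩ := IsAlgClosed.exists_pow_nat_eq (algebraMap O K a) (Nat.pos_of_ne_zero hn)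
  have hx1 : v x ≤ 1 := by
    rw [← pow_le_one_iff hn, ← map_pow, hx]
    exact hv.map_le_one a
  obtain ⟨b, hb⟩ := hv.exists_of_le_one hx1
  exact ⟨b, hv.hom_inj (by rw [map_pow, hb, hx])⟩

namespace PreTilt

variable {K : Type*} [Field K] {v : Valuation K ℝ≥0} {O : Type*} [CommRing O] [Algebra O K]
  {p : ℕ} [Fact p.Prime] [Fact ¬IsUnit (p : O)]

theorem ext {x y : PreTilt O p} (h : ∀ k, coeff k x = coeff k y) : x = y :=
  Perfection.ext h

variable [IsAdicComplete (span {(p : O)}) O]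

theorem coeff_eq_mk_untilt (x : PreTilt O p) (k : ℕ) :
    coeff k x = Ideal.Quotient.mk _ ((frobeniusEquiv (PreTilt O p) p).symm^[k] x).untilt := by
  simp only [mk_untilt_eq_coeff_zero, coeff_iterate_frobeniusEquiv_symm, zero_add]

theorem untilt_zero : (0 : PreTilt O p).untilt = 0 := Perfection.teichmuller_zero

theorem untilt_eq_of_forall_dvd {x : PreTilt O p} {y : O}
    (h : ∀ (n : ℕ) (a : O), (Ideal.Quotient.mk (span {(p : O)}) a : ModP O p) =
      Perfection.coeff (ModP O p) p n x → (p : O) ^ (n + 1) ∣ y - a ^ p ^ n) :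
    x.untilt = y := by
  refine Perfection.teichmuller_spec fun n => ?_
  obtain ⟨a, ha⟩ := Ideal.Quotient.mk_surjective (Perfection.coeff (ModP O p) p n x)
  refine ⟨a, ha, ?_⟩
  rw [SModEq.sub_mem, span_singleton_pow, mem_span_singleton, ← dvd_neg, neg_sub]
  exact h n a ha

theorem exists_untilt_eq (hroot : ∀ a : O, ∃ b, b ^ p = a) (a : O) :
    ∃ x : PreTilt O p, x.untilt = a := by
  choose r hr using hroot
  have hpow (k : ℕ) : (r^[k] a) ^ p ^ k = a := by
    induction k with
    | zero => simp
    | succ k ih => rw [Function.iterate_succ_apply', pow_succ', pow_mul, hr, ih]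
  let x : PreTilt O p := ⟨fun k => Ideal.Quotient.mk _ (r^[k] a), fun k => by
    rw [← map_pow, Function.iterate_succ_apply', hr]⟩
  exact ⟨x, Perfection.teichmuller_spec fun n => ⟨r^[n] a, rfl, by rw [hpow]⟩⟩

theorem eq_zero_of_untilt_eq_zero [IsReduced O] {x : PreTilt O p} (hx : x.untilt = 0) :
    x = 0 := by
  refine ext fun k => ?_
  have hroot : ((frobeniusEquiv (PreTilt O p) p).symm^[k] x).untilt = 0 :=
    IsReduced.eq_zero _ ⟨_, (untilt_iterate_frobeniusEquiv_symm_pow x k).trans hx⟩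
  rw [map_zero, coeff_eq_mk_untilt, hroot, map_zero]

/-- Divisibility passes to the `p ^ k`-th roots of `x♯` and `y♯` in the valuation ring `O`; the
quotients of these roots form a compatible system, i.e. an element of `PreTilt O p`. -/
theorem dvd_of_untilt_dvd (hv : v.Integers O) {x y : PreTilt O p} (h : y.untilt ∣ x.untilt) :
    y ∣ x := by
  have : IsDomain O := hv.hom_inj.isDomain _
  have hp : p ≠ 0 := (Fact.out : p.Prime).ne_zero
  by_cases hy : y = 0
  · rw [hy, untilt_zero, zero_dvd_iff] at h
    rw [hy, eq_zero_of_untilt_eq_zero h]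
  let r (k : ℕ) (z : PreTilt O p) : PreTilt O p := (frobeniusEquiv (PreTilt O p) p).symm^[k] z
  have hr (k : ℕ) (z : PreTilt O p) : (r k z).untilt ^ p ^ k = z.untilt :=
    untilt_iterate_frobeniusEquiv_symm_pow z k
  have hrsucc (k : ℕ) (z : PreTilt O p) : (r (k + 1) z).untilt ^ p = (r k z).untilt := by
    rw [← map_pow]
    congr 1
    simp [r, Function.iterate_succ_apply']
  have hry (k : ℕ) : (r k y).untilt ≠ 0 := fun h0 =>
    hy (eq_zero_of_untilt_eq_zero (by rw [← hr k y, h0, zero_pow (pow_ne_zero k hp)]))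
  have hrdvd (k : ℕ) : (r k y).untilt ∣ (r k x).untilt := by
    rw [hv.dvd_iff_le] at h ⊢
    rw [← hr k x, ← hr k y, map_pow, map_pow, map_pow, map_pow] at h
    exact (pow_le_pow_iff_left₀ zero_le zero_le (pow_ne_zero _ hp)).mp h
  choose d hd using hrdvd
  have hdp (k : ℕ) : d (k + 1) ^ p = d k := by
    apply mul_left_cancel₀ (hry k)
    rw [← hd, ← hrsucc k y, ← hrsucc k x, ← mul_pow, ← hd]
  let z : PreTilt O p := ⟨fun k => Ideal.Quotient.mk _ (d k), fun k => by rw [← map_pow, hdp]⟩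
  refine ⟨z, ext fun k => ?_⟩
  rw [map_mul, coeff_eq_mk_untilt, coeff_eq_mk_untilt y, hd, map_mul]
  rfl

theorem dvd_iff_untilt_dvd (hv : v.Integers O) {x y : PreTilt O p} :
    y ∣ x ↔ y.untilt ∣ x.untilt :=
  ⟨map_dvd untilt, dvd_of_untilt_dvd hv⟩

theorem ker_coeff_zero_eq_span (hv : v.Integers O) {ϖ : PreTilt O p} (hϖ : ϖ.untilt = p) :
    RingHom.ker (coeff 0 : PreTilt O p →+* ModP O p) = span {ϖ} := by
  ext x
  rw [RingHom.mem_ker, coeff_eq_mk_untilt, Function.iterate_zero_apply,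
    Ideal.Quotient.eq_zero_iff_mem, mem_span_singleton, mem_span_singleton, dvd_iff_untilt_dvd hv,
    hϖ]

end PreTilt

namespace WittVector

variable {K : Type*} [Field K] {v : Valuation K ℝ≥0} {O : Type*} [CommRing O] [Algebra O K]
  {p : ℕ} [Fact p.Prime] [Fact ¬IsUnit (p : O)] [IsAdicComplete (span {(p : O)}) O]

theorem ker_le_span_sup_mul_ker (hv : v.Integers O)
    {θ : WittVector p (PreTilt O p) →+* O} (hθ : ∀ x, θ (teichmuller p x) = x.untilt)
    {ϖ : PreTilt O p} (hϖ : ϖ.untilt = p) :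
    RingHom.ker θ ≤ span {teichmuller p ϖ - p} ⊔ span {(p : WittVector p (PreTilt O p))} *
      RingHom.ker θ := by
  have : IsDomain O := hv.hom_inj.isDomain _
  set ξ := teichmuller p ϖ - (p : WittVector p (PreTilt O p))
  intro x hx
  rw [RingHom.mem_ker] at hx
  obtain ⟨w, hw⟩ : (p : WittVector p (PreTilt O p)) ∣ x - teichmuller p (x.coeff 0) := by
    rw [← mem_span_singleton, ← ker_constantCoeff, RingHom.mem_ker, map_sub, constantCoeff_apply,
      constantCoeff_apply, teichmuller_coeff_zero, sub_self]
  have hx0 : (x.coeff 0).untilt = -(p * θ w) := by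
    have := congrArg θ hw
    rw [map_sub, hx, hθ, map_mul, map_natCast] at this
    linear_combination -this
  obtain ⟨c, hc⟩ : ϖ ∣ x.coeff 0 := by
    rw [PreTilt.dvd_iff_untilt_dvd hv, hϖ, hx0]
    exact ⟨-θ w, by ring⟩
  have hx_eq : x = ξ * teichmuller p c + p * (teichmuller p c + w) := by
    rw [sub_eq_iff_eq_add] at hw
    rw [hw, hc, map_mul]
    ring
  rw [hx_eq]
  by_cases hp0 : (p : O) = 0
  · have hϖ0 : ϖ = 0 := zero_dvd_iff.mp
      ((PreTilt.dvd_iff_untilt_dvd hv).mpr (by rw [PreTilt.untilt_zero, hϖ, hp0]))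
    have hξ : ξ = -p := by simp [ξ, hϖ0]
    refine mem_sup_left (mem_span_singleton.mpr ⟨teichmuller p c - (teichmuller p c + w), ?_⟩)
    rw [hξ]
    ring
  · have hθξ : θ ξ = 0 := by rw [map_sub, hθ, hϖ, map_natCast, sub_self]
    have hθz : θ (teichmuller p c + w) = 0 := by
      have := congrArg θ hx_eq
      rw [hx, map_add, map_mul, map_mul, hθξ, map_natCast, zero_mul, zero_add] at this
      exact (mul_eq_zero.mp this.symm).resolve_left hp0
    exact add_mem (mem_sup_left (mul_mem_right _ _ (mem_span_singleton_self ξ)))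
      (mem_sup_right (mul_mem_mul (mem_span_singleton_self _) hθz))

theorem ker_eq_span_teichmuller_sub_p (hv : v.Integers O)
    {θ : WittVector p (PreTilt O p) →+* O} (hθ : ∀ x, θ (teichmuller p x) = x.untilt)
    {ϖ : PreTilt O p} (hϖ : ϖ.untilt = p) :
    RingHom.ker θ = span {teichmuller p ϖ - p} := by
  have hθξ : teichmuller p ϖ - p ∈ RingHom.ker θ := by
    rw [RingHom.mem_ker, map_sub, hθ, hϖ, map_natCast, sub_self]
  exact le_antisymm (le_span_singleton_of_le_sup_mul (ker_le_span_sup_mul_ker hv hθ hϖ))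
    (span_le.mpr (Set.singleton_subset_iff.mpr hθξ))

end WittVector

/-- If `K` is algebraically closed, then `A⁺ = W(E⁺)` is complete and separated for the
`ker θ`-adic topology, where `θ : W(E⁺) → O` is Fontaine's homomorphism. -/
theorem wittVector_preTilt_isAdicComplete_ker_theta
    (p : ℕ) [Fact p.Prime]
    (K : Type*) [Field K] [IsAlgClosed K] (v : Valuation K ℝ≥0)
    (O : Type*) [CommRing O] [Algebra O K] (hv : v.Integers O)
    [Fact (v p ≠ 1)]
    [IsAdicComplete (Ideal.span {(p : O)}) O]
    (θ : haveI := fact_not_isUnit_of_integers_of_fact p hv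
      WittVector p (PreTilt O p) →+* O)
    (hθ : haveI := fact_not_isUnit_of_integers_of_fact p hv
      ∀ (x : PreTilt O p) (n : ℕ) (a : O),
      (Ideal.Quotient.mk (Ideal.span {(p : O)}) a : ModP O p) =
          Perfection.coeff (ModP O p) p n x →
        (p : O) ^ (n + 1) ∣ θ (WittVector.teichmuller p x) - a ^ p ^ n) :
    haveI := fact_not_isUnit_of_integers_of_fact p hv
    IsAdicComplete (RingHom.ker θ) (WittVector p (PreTilt O p)) := by
  have := fact_not_isUnit_of_integers_of_fact p hv
  obtain ⟨ϖ, hϖ⟩ := PreTilt.exists_untilt_eq (hv.exists_pow_eq (Fact.out : p.Prime).ne_zero) p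
  have : IsAdicComplete (span {ϖ}) (PreTilt O p) :=
    Perfection.isAdicComplete_span_singleton (PreTilt.ker_coeff_zero_eq_span hv hϖ)
  rw [WittVector.ker_eq_span_teichmuller_sub_p hv
    (fun x => (PreTilt.untilt_eq_of_forall_dvd (hθ x)).symm) hϖ]
  exact isAdicComplete_span_singleton_of_filtration (WittVector.weakIdeal_antitone _)
    (fun _ => WittVector.eq_zero_of_forall_mem_weakIdeal) WittVector.exists_sub_mem_weakIdeal
    (WittVector.teichmuller_sub_p_pow_mem_weakIdeal (mem_span_singleton_self ϖ))
end

section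
/- Assume K is algebraically closed. Then the ring E⁺ is not Noetherian, and consequently the Witt vector ring A⁺ = W(E⁺) is not Noetherian (even though it is a local-type 'two-dimensional' ring with W(E⁺)/pW(E⁺) ≅ E⁺). -/
/-!
Every element of the perfect domain `E⁺` has a `p`-th root. In a Noetherian domain divisibility
is well founded, while a nonzero nonunit `a` would start the strictly descending divisibility chain
`a, a^(1/p), a^(1/p²), …`; so a Noetherian perfect domain is a field. But `E⁺` is not a field:
as `K` is algebraically closed, `v` takes a value in `(v p, 1)`, and lifting an element of `O` of
such a value to `E⁺` along its `0`-th coordinate gives a nonzero element of valuation `< 1`,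
hence a nonunit. Finally `E⁺` is a quotient of `W(E⁺)`.
-/

open scoped NNReal

theorem WfDvdMonoid.isUnit_of_forall_exists_pow_eq {α : Type*} [CommMonoidWithZero α]
    [WfDvdMonoid α] {n : ℕ} (hn : 1 < n) (hroot : ∀ a : α, ∃ b, b ^ n = a) {a : α}
    (ha : a ≠ 0) : IsUnit a := by
  revert ha
  refine wellFounded_dvdNotUnit.induction (C := fun a => a ≠ 0 → IsUnit a) a fun a ih ha => ?_
  obtain ⟨b, rfl⟩ := hroot a
  have hb : b ≠ 0 := by rintro rfl; exact ha (zero_pow (by omega))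
  by_cases hbu : IsUnit b
  · exact hbu.pow n
  refine (ih b ⟨hb, b ^ (n - 1), ?_, ?_⟩ hb).pow n
  · rwa [isUnit_pow_iff (n := n - 1) (by omega)]
  · rw [← pow_succ', Nat.sub_add_cancel hn.le]

theorem PerfectRing.isField_of_isNoetherianRing (R : Type*) [CommRing R] [IsDomain R]
    [IsNoetherianRing R] (p : ℕ) [Fact p.Prime] [CharP R p] [PerfectRing R p] :
    IsField R where
  exists_pair_ne := exists_pair_ne R
  mul_comm := mul_comm
  mul_inv_cancel ha :=
    (WfDvdMonoid.isUnit_of_forall_exists_pow_eq (Fact.out : p.Prime).one_lt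
      (surjective_frobenius R p) ha).exists_right_inv

theorem IsAlgClosed.exists_lt_valuation_lt_one {K : Type*} [Field K] [IsAlgClosed K]
    (v : Valuation K ℝ≥0) (hnt : ∃ x : K, v x ≠ 0 ∧ v x ≠ 1) {a : ℝ≥0}
    (ha : a < 1) : ∃ z : K, a < v z ∧ v z < 1 := by
  obtain ⟨x, hx0, hx1⟩ : ∃ x : K, 0 < v x ∧ v x < 1 := by
    obtain ⟨x, hx0, hx1⟩ := hnt
    rcases hx1.lt_or_gt with hx1 | hx1
    · exact ⟨x, pos_iff_ne_zero.2 hx0, hx1⟩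
    · exact ⟨x⁻¹, by simpa [pos_iff_ne_zero] using hx0,
        by simpa using inv_lt_one_of_one_lt₀ hx1⟩
  obtain ⟨N, hN⟩ := exists_pow_lt_of_lt_one hx0 ha
  -- `z = x^(1/(N+1))` has `v z` between `a` and `1` because `a^N < v x < 1`.
  obtain ⟨z, rfl⟩ := IsAlgClosed.exists_pow_nat_eq x (Nat.succ_pos N)
  rw [map_pow] at hx1 hN
  refine ⟨z, ?_, (pow_lt_one_iff_of_nonneg zero_le N.succ_ne_zero).1 hx1⟩
  by_contra! hz
  exact (pow_le_pow_left' hz _).not_gt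
    ((pow_le_pow_of_le_one zero_le ha.le N.le_succ).trans_lt hN)

theorem IsNoetherianRing.of_wittVector (p : ℕ) [Fact p.Prime] (R : Type*) [CommRing R]
    [IsNoetherianRing (WittVector p R)] : IsNoetherianRing R :=
  isNoetherianRing_of_surjective _ _ WittVector.constantCoeff
    (WittVector.constantCoeff_surjective p)

section Tilt

variable {K : Type*} [Field K] {v : Valuation K ℝ≥0} {O : Type*} [CommRing O] [Algebra O K]
  (hv : v.Integers O) {p : ℕ}

include hv

theorem Valuation.Integers.valuation_natCast_lt_one {n : ℕ} (hn : ¬IsUnit (n : O)) :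
    v n < 1 := by
  simpa using (hv.map_le_one n).lt_of_ne (mt hv.isUnit_iff_valuation_eq_one.mpr hn)

namespace ModP

theorem preVal_le_one (x : ModP O p) : preVal K v O p x ≤ 1 := by
  unfold preVal
  split_ifs
  exacts [zero_le_one, hv.map_le_one _]

theorem surjective_frobenius [IsAlgClosed K] [Fact p.Prime] [Fact ¬IsUnit (p : O)] :
    Function.Surjective (frobenius (ModP O p) p) := by
  intro x
  obtain ⟨y, rfl⟩ := Ideal.Quotient.mk_surjective x
  obtain ⟨z, hz⟩ := IsAlgClosed.exists_pow_nat_eq (algebraMap O K y) (Fact.out : p.Prime).pos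
  obtain ⟨w, rfl⟩ : ∃ w : O, algebraMap O K w = z := hv.exists_of_le_one <|
    (pow_le_one_iff_of_nonneg zero_le (Fact.out : p.Prime).ne_zero).1
      (by rw [← map_pow, hz]; exact hv.map_le_one y)
  have hw : w ^ p = y := hv.hom_inj (by rwa [map_pow])
  exact ⟨Ideal.Quotient.mk _ w, by rw [frobenius_def, ← map_pow, hw]⟩

end ModP

namespace PreTilt

variable [Fact p.Prime] [Fact ¬IsUnit (p : O)]

theorem val_le_one (f : PreTilt O p) : val K v O hv p f ≤ 1 := by
  obtain rfl | hf := eq_or_ne f 0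
  · simp
  obtain ⟨n, hn⟩ : ∃ n, coeff n f ≠ 0 := not_forall.1 fun h => hf <| Perfection.ext h
  change valAux K v O p f ≤ 1
  rw [valAux_eq hv hn]
  exact pow_le_one' (ModP.preVal_le_one hv _) _

variable [IsAlgClosed K]

theorem exists_pos_val_lt_one (hnt : ∃ x : K, v x ≠ 0 ∧ v x ≠ 1) :
    ∃ f : PreTilt O p, 0 < val K v O hv p f ∧ val K v O hv p f < 1 := by
  obtain ⟨z, hpz, hz1⟩ :=
    IsAlgClosed.exists_lt_valuation_lt_one v hnt (hv.valuation_natCast_lt_one (n := p) Fact.out)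
  obtain ⟨y, rfl⟩ := hv.exists_of_le_one hz1.le
  obtain ⟨f, hf⟩ : ∃ f : PreTilt O p, coeff 0 f = Ideal.Quotient.mk _ y :=
    Perfection.coeff_surjective (ModP.surjective_frobenius hv) 0 _
  have hf0 : coeff 0 f ≠ 0 := hf ▸ (ModP.v_p_lt_val hv).1 hpz
  have hval : val K v O hv p f = v (algebraMap O K y) := by
    change valAux K v O p f = _
    rw [valAux_eq hv hf0, pow_zero, pow_one, hf, ModP.preVal_mk hv (hf ▸ hf0)]
  exact ⟨f, hval ▸ zero_le.trans_lt hpz, hval ▸ hz1⟩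

theorem not_isField (hnt : ∃ x : K, v x ≠ 0 ∧ v x ≠ 1) : ¬IsField (PreTilt O p) := by
  intro hF
  obtain ⟨f, hf0, hf1⟩ := exists_pos_val_lt_one (p := p) hv hnt
  obtain ⟨g, hfg⟩ := hF.mul_inv_cancel ((map_eq_zero hv).not.1 hf0.ne')
  exact hf1.ne <|
    Valuation.Integers.one_of_isUnit' (IsUnit.of_mul_eq_one g hfg) (val_le_one hv)

theorem not_isNoetherianRing (hnt : ∃ x : K, v x ≠ 0 ∧ v x ≠ 1) :
    ¬IsNoetherianRing (PreTilt O p) := fun _ =>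
  have := isDomain K v O hv p
  not_isField hv hnt (PerfectRing.isField_of_isNoetherianRing _ p)

end PreTilt

end Tilt

/-- If `K` is algebraically closed (with a nontrivial rank-one valuation `v` with `v p < 1`),
then `E⁺` is not Noetherian, and consequently `A⁺ = W(E⁺)` is not Noetherian either. -/
theorem preTilt_not_noetherian
    (p : ℕ) [Fact p.Prime]
    (K : Type*) [Field K] [IsAlgClosed K] (v : Valuation K ℝ≥0)
    (O : Type*) [CommRing O] [Algebra O K] (hv : v.Integers O)
    [Fact (v p ≠ 1)]
    (hnt : ∃ x : K, v x ≠ 0 ∧ v x ≠ 1) :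
    haveI : Fact ¬IsUnit (p : O) :=
      Fact.mk <| mt hv.one_of_isUnit <| (map_natCast (algebraMap O K) p).symm ▸ ‹Fact (v p ≠ 1)›.1
    ¬ IsNoetherianRing (PreTilt O p) ∧
      ¬ IsNoetherianRing (WittVector p (PreTilt O p)) := by
  have : Fact ¬IsUnit (p : O) :=
    Fact.mk <| mt hv.one_of_isUnit <| (map_natCast (algebraMap O K) p).symm ▸ ‹Fact (v p ≠ 1)›.1
  have hE := PreTilt.not_isNoetherianRing (p := p) hv hnt
  exact ⟨hE, fun _ => hE (.of_wittVector p _)⟩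
end

section
/- Assume K is algebraically closed. Then E⁺ is a valuation ring: it is an integral domain and for any two elements x, y ∈ E⁺, either x divides y or y divides x. (E⁺ is the valuation ring for the valuation v_E(x) = lim_{n→∞} v(x_n)^{p^n}.) -/
/-!
Comparing valuations, it suffices to show that `val g ≤ val f` forces `f ∣ g`. Applying an
inverse power of Frobenius we may assume that all coefficients `f n ∈ O/p` are nonzero; then
`val g ≤ val f` gives `f n ∣ g n` for every `n`. A quotient `g n / f n` is only defined up to the
annihilator of `f n`, but Frobenius kills the annihilator of `f (n + 1)` (in `O/p`, two elements
with nonzero `p`-th powers have nonzero product). Hence the classes `(g (n + 1) / f (n + 1)) ^ p`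
are well defined, compatible under Frobenius, and form the quotient `g / f` in the perfection.
-/

open scoped NNReal

namespace Perfection

variable {R : Type*} [CommRing R] {p : ℕ} [Fact p.Prime] [CharP R p]

theorem dvd_of_forall_coeff_dvd {f g : Perfection R p}
    (hdvd : ∀ n, coeff R p n f ∣ coeff R p n g)
    (hann : ∀ n y, coeff R p (n + 1) f * y = 0 → y ^ p = 0) : f ∣ g := by
  choose t ht using hdvd
  have pow_eq_of_mul_eq : ∀ n c c', coeff R p (n + 1) f * c = coeff R p (n + 1) g →
      coeff R p (n + 1) f * c' = coeff R p (n + 1) g → c ^ p = c' ^ p := by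
    intro n c c' hc hc'
    rw [← sub_eq_zero, ← sub_pow_char]
    exact hann n _ (by rw [mul_sub, hc, hc', sub_self])
  have compat : ∀ n, (t (n + 2) ^ p) ^ p = t (n + 1) ^ p := fun n =>
    pow_eq_of_mul_eq n _ _ (by rw [← coeff_pow_p' f, ← mul_pow, ← ht, coeff_pow_p'])
      (ht (n + 1)).symm
  obtain ⟨h, coeff_h⟩ : ∃ h : Perfection R p, ∀ n, coeff R p n h = t (n + 1) ^ p :=
    ⟨⟨_, compat⟩, fun _ => rfl⟩
  refine ⟨h, ext fun n => ?_⟩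
  rw [map_mul, coeff_h, ← coeff_pow_p' f, ← coeff_pow_p' g, ← mul_pow, ← ht]

end Perfection

namespace ModP

variable {K : Type*} [Field K] {v : Valuation K ℝ≥0} {O : Type*} [CommRing O] [Algebra O K]
  (hv : v.Integers O) {p : ℕ}

include hv in
theorem dvd_of_preVal_le {x y : ModP O p} (hle : preVal K v O p y ≤ preVal K v O p x) :
    x ∣ y := by
  by_cases hy : y = 0
  · exact hy ▸ dvd_zero x
  have hx : x ≠ 0 := by
    rintro rfl
    rw [preVal_zero, nonpos_iff_eq_zero, preVal_eq_zero hv] at hle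
    exact hy hle
  obtain ⟨a, rfl⟩ := Ideal.Quotient.mk_surjective x
  obtain ⟨b, rfl⟩ := Ideal.Quotient.mk_surjective y
  rw [preVal_mk hv hx, preVal_mk hv hy] at hle
  exact map_dvd _ (hv.dvd_of_le hle)

end ModP

namespace PreTilt

variable {K : Type*} [Field K] {v : Valuation K ℝ≥0} {O : Type*} [CommRing O] [Algebra O K]
  (hv : v.Integers O) {p : ℕ} [hp : Fact p.Prime] [Fact ¬IsUnit (p : O)]

include hv in
theorem coeff_dvd_coeff_of_val_le {f g : PreTilt O p} {n : ℕ} (hf : coeff n f ≠ 0)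
    (hle : val K v O hv p g ≤ val K v O hv p f) : coeff n f ∣ coeff n g := by
  apply ModP.dvd_of_preVal_le hv
  by_cases hg : coeff n g = 0
  · rw [hg, ModP.preVal_zero]
    exact zero_le
  change valAux K v O p g ≤ valAux K v O p f at hle
  rw [valAux_eq hv hf, valAux_eq hv hg] at hle
  exact (pow_le_pow_iff_left₀ zero_le zero_le (pow_ne_zero n hp.out.ne_zero)).1 hle

include hv in
theorem dvd_of_val_le {f g : PreTilt O p} (hle : val K v O hv p g ≤ val K v O hv p f) :
    f ∣ g := by
  by_cases hf : f = 0
  · rw [hf, Valuation.map_zero, nonpos_iff_eq_zero, map_eq_zero hv] at hle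
    rw [hf, hle]
  obtain ⟨N, hN⟩ : ∃ N, coeff N f ≠ 0 := not_forall.1 fun h => hf (Perfection.ext h)
  set e := (frobeniusEquiv (PreTilt O p) p).symm ^ N
  have coeff_e : ∀ x n, coeff n (e x) = coeff (n + N) x := by
    intro x n
    rw [RingAut.coe_pow, coeff_iterate_frobeniusEquiv_symm]
  have coeff_e_ne_zero : ∀ n, coeff n (e f) ≠ 0 := fun n => by
    rw [coeff_e, add_comm]; exact Perfection.coeff_add_ne_zero hN n
  rw [← map_dvd_iff e]
  refine Perfection.dvd_of_forall_coeff_dvd (fun n => ?_) fun n y hfy => ?_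
  · rw [← coeff_def, ← coeff_def, coeff_e, coeff_e]
    exact coeff_dvd_coeff_of_val_le hv (coeff_e f n ▸ coeff_e_ne_zero n) hle
  · by_contra hy
    refine ModP.mul_ne_zero_of_pow_p_ne_zero hv ?_ hy hfy
    rw [← coeff_def, coeff_pow_p]
    exact coeff_e_ne_zero n

end PreTilt

theorem preTilt_isDomain_and_dvd_total_general
    (p : ℕ) [Fact p.Prime]
    (K : Type*) [Field K] (v : Valuation K ℝ≥0)
    (O : Type*) [CommRing O] [Algebra O K] (hv : v.Integers O)
    [Fact (v p ≠ 1)] :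
    haveI : Fact ¬IsUnit (p : O) :=
      Fact.mk <| mt hv.one_of_isUnit <| (map_natCast (algebraMap O K) p).symm ▸ (Fact.out : v p ≠ 1)
    IsDomain (PreTilt O p) ∧
      ∀ x y : PreTilt O p, x ∣ y ∨ y ∣ x := by
  have : Fact ¬IsUnit (p : O) :=
    Fact.mk <| mt hv.one_of_isUnit <| (map_natCast (algebraMap O K) p).symm ▸ (Fact.out : v p ≠ 1)
  refine ⟨PreTilt.isDomain K v O hv p, fun x y => ?_⟩
  exact (le_total (PreTilt.val K v O hv p y) (PreTilt.val K v O hv p x)).imp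
    (PreTilt.dvd_of_val_le hv) (PreTilt.dvd_of_val_le hv)

/-- If `K` is algebraically closed, then `E⁺` is a valuation ring: it is an integral domain
and for any `x, y ∈ E⁺`, either `x ∣ y` or `y ∣ x`. -/
theorem preTilt_isDomain_and_dvd_total
    (p : ℕ) [Fact p.Prime]
    (K : Type*) [Field K] [IsAlgClosed K] (v : Valuation K ℝ≥0)
    (O : Type*) [CommRing O] [Algebra O K] (hv : v.Integers O)
    [Fact (v p ≠ 1)] :
    haveI : Fact ¬IsUnit (p : O) :=
      Fact.mk <| mt hv.one_of_isUnit <| (map_natCast (algebraMap O K) p).symm ▸ (Fact.out : v p ≠ 1)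
    IsDomain (PreTilt O p) ∧
      ∀ x y : PreTilt O p, x ∣ y ∨ y ∣ x :=
  preTilt_isDomain_and_dvd_total_general p K v O hv
end

section
/- Let k be a field and let u ∈ k((t)) be a formal Laurent series lying in t^{-1}·k[[t]] but not in k[[t]] (equivalently, u has order exactly −1). Let A = k[u] be the k-subalgebra of k((t)) generated by u. Then the sequence 0 → k → k[u] → k((t))/k[[t]] → 0 is exact; concretely: (i) A ∩ k[[t]] = k (the only polynomials in u lying in k[[t]] are the constants), and (ii) A + k[[t]] = k((t)) (every Laurent series is a polynomial in u plus a power series). -/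
/-!
Since `u` has order `-1`, a polynomial of degree `n` in `u` has order exactly `-n`, so it is a
power series only when `n = 0`. Conversely, a Laurent series `w` of order `-n < 0` has the same
order and leading coefficient as a suitable `c • uⁿ`, so `w - c • uⁿ` has a pole of smaller
order; after finitely many such steps only a power series is left.
-/

open HahnSeries Polynomial

theorem HahnSeries.orderTop_pow {Γ R : Type*} [AddCommMonoid Γ] [LinearOrder Γ]
    [IsOrderedCancelAddMonoid Γ] [Semiring R] [NoZeroDivisors R] [Nontrivial R]
    (x : HahnSeries Γ R) (n : ℕ) : (x ^ n).orderTop = n • x.orderTop := by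
  induction n with
  | zero => simp
  | succ n ih => rw [pow_succ, orderTop_mul, ih, succ_nsmul]

namespace LaurentSeries

theorem mem_range_ofPowerSeries_iff {R : Type*} [Semiring R] (x : LaurentSeries R) :
    x ∈ Set.range (ofPowerSeries ℤ R) ↔ 0 ≤ x.orderTop := by
  constructor
  · rintro ⟨f, rfl⟩
    exact le_orderTop_iff_forall.2 fun j hj ↦ by rw [PowerSeries.coeff_coe, if_pos (mod_cast hj)]
  · intro hx
    obtain rfl | hx0 := eq_or_ne x 0
    · exact ⟨0, map_zero _⟩
    rw [← order_eq_orderTop_of_ne_zero hx0, WithTop.coe_nonneg] at hx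
    exact ⟨_, X_order_mul_powerSeriesPart (Int.toNat_of_nonneg hx)⟩

theorem orderTop_eq_neg_one_of_single_one_mul_mem_range {R : Type*} [Semiring R]
    [NoZeroDivisors R] [Nontrivial R] {u : LaurentSeries R}
    (h1 : single (1 : ℤ) (1 : R) * u ∈ Set.range (ofPowerSeries ℤ R))
    (h2 : u ∉ Set.range (ofPowerSeries ℤ R)) : u.orderTop = -1 := by
  rw [mem_range_ofPowerSeries_iff, orderTop_mul, orderTop_single one_ne_zero] at h1
  rw [mem_range_ofPowerSeries_iff] at h2
  obtain ⟨g, hg⟩ := WithTop.ne_top_iff_exists.1 (ne_top_of_lt (not_le.1 h2))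
  rw [← hg, ← WithTop.coe_one, ← WithTop.LinearOrderedAddCommGroup.coe_neg]
  rw [← hg] at h1 h2
  norm_cast at h1 h2 ⊢
  omega

theorem algebraMap_eq_C {R : Type*} [CommSemiring R] (r : R) :
    algebraMap R (LaurentSeries R) r = HahnSeries.C r := by
  rw [algebraMap_apply', PowerSeries.algebraMap_apply, Algebra.algebraMap_self, RingHom.id_apply,
    ofPowerSeries_C]

section IsDomain

variable {R : Type*} [CommRing R] [IsDomain R]

theorem orderTop_algebraMap_mul_pow {r : R} (hr : r ≠ 0) (x : LaurentSeries R) (n : ℕ) :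
    (algebraMap R (LaurentSeries R) r * x ^ n).orderTop = n • x.orderTop := by
  rw [orderTop_mul, HahnSeries.orderTop_pow, algebraMap_eq_C, C_apply, orderTop_single hr,
    WithTop.coe_zero, zero_add]

theorem orderTop_aeval {x : LaurentSeries R} (hx : x.orderTop < 0) {p : R[X]} (hp : p ≠ 0) :
    (aeval x p).orderTop = p.natDegree • x.orderTop := by
  induction h : p.natDegree using Nat.strong_induction_on generalizing p with
  | _ n ih =>
  obtain ⟨g, hg⟩ := WithTop.ne_top_iff_exists.1 hx.ne_top
  have hlead : (aeval x (monomial n p.leadingCoeff)).orderTop = n • x.orderTop := by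
    rw [aeval_monomial, orderTop_algebraMap_mul_pow (leadingCoeff_ne_zero.2 hp)]
  have hrest : n • x.orderTop < (aeval x p.eraseLead).orderTop := by
    by_cases h0 : p.eraseLead = 0
    · rw [h0, map_zero, orderTop_zero, ← hg, ← WithTop.coe_nsmul]
      exact WithTop.coe_lt_top _
    have hlt := h ▸ p.eraseLead_natDegree_lt_or_eraseLead_eq_zero.resolve_right h0
    rw [ih _ hlt h0 rfl, ← hg, ← WithTop.coe_nsmul, ← WithTop.coe_nsmul, WithTop.coe_lt_coe]
    have hg0 : g < 0 := by exact_mod_cast hg ▸ hx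
    simp only [nsmul_eq_mul]
    nlinarith
  rw [← p.eraseLead_add_monomial_natDegree_leadingCoeff, map_add, h,
    orderTop_add_eq_right (hlead ▸ hrest), hlead]

theorem exists_eq_algebraMap_of_mem_adjoin_of_mem_range {u a : LaurentSeries R}
    (hu : u.orderTop < 0) (ha : a ∈ Algebra.adjoin R {u})
    (har : a ∈ Set.range (ofPowerSeries ℤ R)) :
    ∃ c : R, a = algebraMap R (LaurentSeries R) c := by
  rw [Algebra.adjoin_singleton_eq_range_aeval] at ha
  obtain ⟨p, rfl⟩ := ha
  obtain rfl | hp := eq_or_ne p 0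
  · exact ⟨0, by simp⟩
  rw [mem_range_ofPowerSeries_iff, AlgHom.toRingHom_eq_coe, RingHom.coe_coe,
    orderTop_aeval hu hp] at har
  have hdeg : p.natDegree = 0 := by
    obtain ⟨g, hg⟩ := WithTop.ne_top_iff_exists.1 hu.ne_top
    rw [← hg, ← WithTop.coe_nsmul] at har
    have hg0 : g < 0 := by exact_mod_cast hg ▸ hu
    have : 0 ≤ p.natDegree • g := by exact_mod_cast har
    rw [nsmul_eq_mul] at this
    nlinarith
  rw [eq_C_of_natDegree_eq_zero hdeg, AlgHom.toRingHom_eq_coe, RingHom.coe_coe, aeval_C]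
  exact ⟨_, rfl⟩

end IsDomain

section Field

variable {K : Type*} [Field K]

theorem exists_lt_orderTop_sub_algebraMap_mul_pow {u w : LaurentSeries K} (hu : u ≠ 0) {n : ℕ}
    (hw : w.orderTop = n • u.orderTop) :
    ∃ c : K, n • u.orderTop < (w - algebraMap K (LaurentSeries K) c * u ^ n).orderTop := by
  have hun : u ^ n ≠ 0 := pow_ne_zero n hu
  have hw0 : w ≠ 0 :=
    orderTop_ne_top.1 (by rw [hw, ← HahnSeries.orderTop_pow]; exact orderTop_ne_top.2 hun)
  set c := w.leadingCoeff / (u ^ n).leadingCoeff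
  have hc : c ≠ 0 := div_ne_zero (leadingCoeff_ne_zero.2 hw0) (leadingCoeff_ne_zero.2 hun)
  obtain ⟨g, hg⟩ := WithTop.ne_top_iff_exists.1 (orderTop_ne_top.2 hw0)
  rw [hw] at hg
  refine ⟨c, hg ▸ le_orderTop_of_leadingCoeff_eq (hw.trans hg.symm)
    ((orderTop_algebraMap_mul_pow hc u n).trans hg.symm) ?_⟩
  rw [HahnSeries.leadingCoeff_mul, algebraMap_eq_C, C_apply, leadingCoeff_of_single,
    div_mul_cancel₀ _ (leadingCoeff_ne_zero.2 hun)]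

theorem exists_mem_adjoin_orderTop_sub_nonneg {u : LaurentSeries K} (hu : u.orderTop = -1)
    (n : ℕ) {w : LaurentSeries K} (hw : ((-n : ℤ) : WithTop ℤ) ≤ w.orderTop) :
    ∃ a ∈ Algebra.adjoin K {u}, 0 ≤ (w - a).orderTop := by
  have hu0 : u ≠ 0 := orderTop_ne_top.1 (hu ▸ WithTop.coe_ne_top (a := -1))
  have hpow (m : ℕ) : m • u.orderTop = ((-m : ℤ) : WithTop ℤ) := by
    rw [hu, ← WithTop.coe_one, ← WithTop.LinearOrderedAddCommGroup.coe_neg,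
      ← WithTop.coe_nsmul, smul_neg, nsmul_one]
  induction n generalizing w with
  | zero => exact ⟨0, zero_mem _, by simpa using hw⟩
  | succ n ih =>
    by_cases hwn : ((-n : ℤ) : WithTop ℤ) ≤ w.orderTop
    · exact ih hwn
    have hw_eq : w.orderTop = (n + 1) • u.orderTop := by
      rw [hpow]
      obtain ⟨g, hg⟩ := WithTop.ne_top_iff_exists.1 (ne_top_of_lt (not_le.1 hwn))
      rw [← hg] at hw hwn ⊢
      norm_cast at hw hwn ⊢
      omega
    obtain ⟨c, hc⟩ := exists_lt_orderTop_sub_algebraMap_mul_pow hu0 hw_eq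
    rw [hpow] at hc
    set v := algebraMap K (LaurentSeries K) c * u ^ (n + 1)
    have hv : v ∈ Algebra.adjoin K {u} :=
      mul_mem (Subalgebra.algebraMap_mem _ c) (pow_mem (Algebra.self_mem_adjoin_singleton K u) _)
    have hwv : ((-n : ℤ) : WithTop ℤ) ≤ (w - v).orderTop := by
      cases h : (w - v).orderTop with
      | top => exact le_top
      | coe g =>
        rw [h] at hc
        norm_cast at hc ⊢
        omega
    obtain ⟨a, ha, hwva⟩ := ih hwv
    exact ⟨a + v, add_mem ha hv, by rwa [sub_add_eq_sub_sub_swap]⟩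

theorem exists_mem_adjoin_eq_add_ofPowerSeries {u : LaurentSeries K} (hu : u.orderTop = -1)
    (w : LaurentSeries K) :
    ∃ a ∈ Algebra.adjoin K {u}, ∃ f : PowerSeries K, w = a + ofPowerSeries ℤ K f := by
  have hw : ((-(-w.order).toNat : ℤ) : WithTop ℤ) ≤ w.orderTop := by
    obtain rfl | hw0 := eq_or_ne w 0
    · simp
    rw [← order_eq_orderTop_of_ne_zero hw0, WithTop.coe_le_coe]
    omega
  obtain ⟨a, ha, hwa⟩ := exists_mem_adjoin_orderTop_sub_nonneg hu _ hw
  obtain ⟨f, hf⟩ := (mem_range_ofPowerSeries_iff _).2 hwa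
  exact ⟨a, ha, f, by rw [hf, add_sub_cancel]⟩

end Field

end LaurentSeries

/-- If `u ∈ k((t))` lies in `t⁻¹·k[[t]]` but not in `k[[t]]` (i.e. `u` has order exactly `-1`),
then `0 → k → k[u] → k((t))/k[[t]] → 0` is exact: (i) the only elements of `k[u] ∩ k[[t]]`
are the constants, and (ii) every Laurent series is a polynomial in `u` plus a power series. -/
theorem laurentSeries_adjoin_inf_powerSeries
    (k : Type*) [Field k] (u : LaurentSeries k)
    (h1 : HahnSeries.single (1 : ℤ) (1 : k) * u ∈ Set.range (HahnSeries.ofPowerSeries ℤ k))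
    (h2 : u ∉ Set.range (HahnSeries.ofPowerSeries ℤ k)) :
    (∀ a ∈ Algebra.adjoin k {u}, a ∈ Set.range (HahnSeries.ofPowerSeries ℤ k) →
      ∃ c : k, a = algebraMap k (LaurentSeries k) c) ∧
    (∀ w : LaurentSeries k, ∃ a ∈ Algebra.adjoin k {u}, ∃ f : PowerSeries k,
      w = a + HahnSeries.ofPowerSeries ℤ k f) := by
  have hu := LaurentSeries.orderTop_eq_neg_one_of_single_one_mul_mem_range h1 h2
  exact ⟨fun a ha har ↦ LaurentSeries.exists_eq_algebraMap_of_mem_adjoin_of_mem_range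
      (hu ▸ WithTop.coe_lt_coe.2 (by norm_num)) ha har,
    LaurentSeries.exists_mem_adjoin_eq_add_ofPowerSeries hu⟩
end

section
/- Let K be an algebraically closed field equipped with a nontrivial multiplicative nonarchimedean rank-one valuation (equivalently, a nonarchimedean multiplicative norm), so that K is a valued/normed field. Then the completion of K with respect to this valuation is again an algebraically closed field. (In particular, ℂ_p, the completion of an algebraic closure of ℚ_p, is algebraically closed.) -/
/-!
Approximate a monic irreducible `p` over `L` by monic polynomials `g k` over the dense
algebraically closed subfield `K`, with coefficient errors of order `2⁻ᵏᵈ` (`d = deg p`). Each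
`g k` splits, and by continuity of roots every root of `g k` lies within `2⁻ᵏ · max ‖x‖ 1` of a
root of `g (k + 1)`. By the ultrametric inequality the resulting sequence of roots stays bounded,
so it is Cauchy, and its limit is a root of `p`. Unlike Mathlib's `IsAlgClosed.of_denseRange`,
no separability argument is involved, so there is no assumption on the characteristic.
-/

open UniformSpace Polynomial Filter Topology
open scoped NNReal

namespace Polynomial

variable {L : Type*} [NormedField L]

theorem norm_eval_le_of_forall_norm_coeff_le [IsUltrametricDist L] {q : L[X]} {N : ℕ}
    (hN : q.natDegree ≤ N) {δ B : ℝ} (hδ : 0 ≤ δ) (hB : 1 ≤ B) (hc : ∀ i, ‖q.coeff i‖ ≤ δ)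
    {a : L} (ha : ‖a‖ ≤ B) : ‖q.eval a‖ ≤ δ * B ^ N := by
  rw [eval_eq_sum_range' (Nat.lt_succ_of_le hN)]
  refine IsUltrametricDist.norm_sum_le_of_forall_le_of_nonneg (by positivity) fun i hi => ?_
  rw [norm_mul, norm_pow]
  have hi : i ≤ N := Nat.lt_succ_iff.mp (Finset.mem_range.mp hi)
  exact mul_le_mul (hc i) ((pow_le_pow_left₀ (norm_nonneg a) ha i).trans
    (pow_le_pow_right₀ hB hi)) (by positivity) hδ

theorem exists_isRoot_norm_sub_lt_of_norm_coeff_sub_lt {f g : L[X]} (hfm : f.Monic)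
    (hgm : g.Monic) (hdeg : g.natDegree = f.natDegree) (hg : g.Splits) {a : L}
    (ha : f.IsRoot a) {r : ℝ} (hr : 0 < r)
    (hcoeff : ∀ i, ‖g.coeff i - f.coeff i‖ < r ^ f.natDegree / (f.natDegree + 1)) :
    ∃ b, g.IsRoot b ∧ ‖a - b‖ < r * max ‖a‖ 1 := by
  have hn : f.natDegree ≠ 0 := fun h => by simp [hfm.natDegree_eq_zero.mp h] at ha
  obtain ⟨b, hb, hab⟩ :=
    exists_roots_norm_sub_lt_of_norm_coeff_sub_lt (by positivity) ha hfm hgm hdeg hcoeff hg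
  refine ⟨b, isRoot_of_mem_roots hb, ?_⟩
  rwa [mul_div_cancel₀ _ (by positivity), Real.pow_rpow_inv_natCast hr.le hn] at hab

theorem exists_seq_isRoot_norm_sub_lt {g : ℕ → L[X]} {n : ℕ} (hn : n ≠ 0)
    (hm : ∀ k, (g k).Monic) (hdeg : ∀ k, (g k).natDegree = n) (hs : ∀ k, (g k).Splits)
    {c : ℝ} (hc : 0 < c)
    (hcoeff : ∀ k i, ‖(g (k + 1)).coeff i - (g k).coeff i‖ < (c ^ k) ^ n / (n + 1)) :
    ∃ x : ℕ → L, (∀ k, (g k).IsRoot (x k)) ∧ ∀ k, ‖x k - x (k + 1)‖ < c ^ k * max ‖x k‖ 1 := by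
  have hstep (k : ℕ) (a : {a // (g k).IsRoot a}) :
      ∃ b, (g (k + 1)).IsRoot b ∧ ‖a.1 - b‖ < c ^ k * max ‖a.1‖ 1 :=
    exists_isRoot_norm_sub_lt_of_norm_coeff_sub_lt (hm k) (hm (k + 1)) (by rw [hdeg, hdeg])
      (hs (k + 1)) a.2 (by positivity) (by simpa only [hdeg] using hcoeff k)
  obtain ⟨x₀, hx₀⟩ := (hs 0).exists_eval_eq_zero
    (by rw [degree_eq_natDegree (hm 0).ne_zero, hdeg]; exact_mod_cast hn)
  let x (k : ℕ) : {a // (g k).IsRoot a} :=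
    Nat.rec ⟨x₀, hx₀⟩ (fun k a => ⟨(hstep k a).choose, (hstep k a).choose_spec.1⟩) k
  exact ⟨fun k => (x k).1, fun k => (x k).2, fun k => (hstep k (x k)).choose_spec.2⟩

end Polynomial

section Ultrametric

variable {E : Type*} [SeminormedAddCommGroup E] [IsUltrametricDist E]

theorem norm_le_max_norm_zero_one_of_norm_sub_le {x : ℕ → E} {r : ℕ → ℝ} (hr : ∀ k, r k ≤ 1)
    (h : ∀ k, ‖x k - x (k + 1)‖ ≤ r k * max ‖x k‖ 1) (k : ℕ) : ‖x k‖ ≤ max ‖x 0‖ 1 := by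
  have hanti : Antitone fun k => max ‖x k‖ 1 := by
    refine antitone_nat_of_succ_le fun k => max_le ?_ (le_max_right _ _)
    calc ‖x (k + 1)‖ = ‖x k + -(x k - x (k + 1))‖ := by rw [neg_sub, add_sub_cancel]
      _ ≤ max ‖x k‖ ‖x k - x (k + 1)‖ := by
        simpa only [norm_neg] using IsUltrametricDist.norm_add_le_max (x k) (-(x k - x (k + 1)))
      _ ≤ max ‖x k‖ 1 :=
        max_le (le_max_left _ _) ((h k).trans (mul_le_of_le_one_left (by positivity) (hr k)))
  exact (le_max_left _ _).trans (hanti (Nat.zero_le k))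

theorem cauchySeq_of_norm_sub_le_geometric_mul_max_norm_one {x : ℕ → E} {c : ℝ}
    (hc0 : 0 ≤ c) (hc1 : c < 1) (h : ∀ k, ‖x k - x (k + 1)‖ ≤ c ^ k * max ‖x k‖ 1) :
    CauchySeq x := by
  refine cauchySeq_of_le_geometric c (max ‖x 0‖ 1) hc1 fun k => ?_
  rw [dist_eq_norm, mul_comm]
  refine (h k).trans (mul_le_mul_of_nonneg_left (max_le ?_ (le_max_right _ _)) (by positivity))
  exact norm_le_max_norm_zero_one_of_norm_sub_le (fun k => pow_le_one₀ hc0 hc1.le) h k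

end Ultrametric

theorem IsAlgClosed.of_denseRange_of_isUltrametricDist {K L : Type*} [Field K] [IsAlgClosed K]
    [NormedField L] [IsUltrametricDist L] [CompleteSpace L] [Algebra K L]
    (hd : DenseRange (algebraMap K L)) : IsAlgClosed L := by
  refine IsAlgClosed.of_exists_root _ fun p hpm hirr => ?_
  set n := p.natDegree
  have hn : n ≠ 0 := hirr.natDegree_pos.ne'
  -- chosen so that `exists_isRoot_norm_sub_lt_of_norm_coeff_sub_lt` moves roots by `2⁻¹ ^ k`
  set ε : ℕ → ℝ := fun k => ((2⁻¹ : ℝ) ^ k) ^ n / (n + 1)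
  have hε_pos (k : ℕ) : 0 < ε k := by positivity
  have hε_anti (k : ℕ) : ε (k + 1) ≤ ε k := by
    refine div_le_div_of_nonneg_right (pow_le_pow_left₀ (by positivity) ?_ n) (by positivity)
    exact pow_le_pow_of_le_one (by norm_num) (by norm_num) k.le_succ
  choose Q hQm hQdeg hQ using fun k =>
    exists_monic_and_natDegree_eq_and_norm_map_algebraMap_coeff_sub_lt hd hpm (hε_pos k)
  set g : ℕ → L[X] := fun k => (Q k).map (algebraMap K L)
  have hcoeff (k i : ℕ) : ‖(g (k + 1)).coeff i - (g k).coeff i‖ < ε k := by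
    rw [← dist_eq_norm]
    refine (dist_triangle_max _ (p.coeff i) _).trans_lt ?_
    rw [dist_comm (p.coeff i), dist_eq_norm, dist_eq_norm]
    exact max_lt ((hQ (k + 1) i).trans_le (hε_anti k)) (hQ k i)
  obtain ⟨x, hroot, hx⟩ := exists_seq_isRoot_norm_sub_lt hn (fun k => (hQm k).map _)
    (fun k => by rw [natDegree_map, ← hQdeg]) (fun k => (IsAlgClosed.splits _).map _)
    (by norm_num : (0 : ℝ) < 2⁻¹) hcoeff
  obtain ⟨z, hz⟩ := cauchySeq_tendsto_of_complete <|
    cauchySeq_of_norm_sub_le_geometric_mul_max_norm_one (by norm_num) (by norm_num)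
      fun k => (hx k).le
  have hbound (k : ℕ) : ‖p.eval (x k)‖ ≤ ε k * max ‖x 0‖ 1 ^ n := by
    rw [← sub_zero (p.eval _), ← (hroot k).eq_zero, ← eval_sub]
    refine norm_eval_le_of_forall_norm_coeff_le ?_ (hε_pos k).le (le_max_right _ _)
      (fun i => by rw [coeff_sub, norm_sub_rev]; exact (hQ k i).le) ?_
    · exact (natDegree_sub_le _ _).trans (by rw [natDegree_map, ← hQdeg, max_self])
    · exact norm_le_max_norm_zero_one_of_norm_sub_le
        (fun k => pow_le_one₀ (by norm_num) (by norm_num)) (fun k => (hx k).le) k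
  have hε_tendsto : Tendsto ε atTop (𝓝 0) := by
    have := ((tendsto_pow_atTop_nhds_zero_of_lt_one (by norm_num) (by norm_num :
      (2⁻¹ : ℝ) < 1)).pow n).div_const ((n : ℝ) + 1)
    rwa [zero_pow hn, zero_div] at this
  refine ⟨z, tendsto_nhds_unique ((p.continuous.tendsto z).comp hz) ?_⟩
  exact squeeze_zero_norm hbound
    (by simpa only [zero_mul] using hε_tendsto.mul_const (max ‖x 0‖ 1 ^ n))

noncomputable abbrev Valuation.RankOne.ofNNReal {R : Type*} [Ring R] (v : Valuation R ℝ≥0)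
    (h : ∃ x, v x ≠ 0 ∧ v x ≠ 1) : v.RankOne where
  hom' := MonoidWithZeroHom.ValueGroup₀.embedding
  strictMono' := MonoidWithZeroHom.ValueGroup₀.embedding_strictMono
  exists_val_nontrivial := h

/-- The completion of an algebraically closed field with respect to a nontrivial
multiplicative nonarchimedean rank-one valuation is again algebraically closed
(e.g. `ℂ_p` is algebraically closed). -/
theorem isAlgClosed_completion
    (K : Type*) [Field K] [Valued K NNReal] [IsAlgClosed K]
    (hnt : ∃ x : K, Valued.v x ≠ 0 ∧ Valued.v x ≠ 1) :
    IsAlgClosed (Completion K) := by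
  obtain ⟨x, hx⟩ := hnt
  let := Valuation.RankOne.ofNNReal (Valued.v : Valuation (Completion K) ℝ≥0)
    ⟨x, by rwa [Valued.valuedCompletion_apply]⟩
  let := Valued.toNormedField (Completion K) ℝ≥0
  exact IsAlgClosed.of_denseRange_of_isUltrametricDist Completion.denseRange_coe
end
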